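/- arXiv:2106.07962 — 9 statements merged into one kernel-verified Lean document; each statement's English description precedes it below -/
import Mathlib

section
/- Let C be a linear code of length n over R. Then φ(C^⊥) = (φ(C))^⊥, where C^⊥ is the dual of C in R^n with respect to the standard bilinear form over R, and (φ(C))^⊥ is the dual of φ(C) in 𝔽_q^{en} with respect to the standard bilinear form over 𝔽_q. -/
open Polynomial

noncomputable section

/-- The ring `R = 𝔽_q[u]/⟨u^e − 1⟩`. -/
abbrev Rring (F : Type) [Field F] (e : ℕ) : Type := AdjoinRoot ((X : Polynomial F) ^ e - 1)

/-- Dual of a linear code (submodule of `ι → S`) with respect to the standard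
bilinear form `⟨x, y⟩ = ∑ j, x j * y j`. -/
def dualCode {S ι : Type} [CommRing S] [Fintype ι] (C : Submodule S (ι → S)) :
    Submodule S (ι → S) where
  carrier := {x | ∀ y ∈ C, ∑ j, x j * y j = 0}
  add_mem' := by
    intro a b ha hb y hy
    have : ∑ j, (a j + b j) * y j = (∑ j, a j * y j) + ∑ j, b j * y j := by
      rw [← Finset.sum_add_distrib]; simp [add_mul]
    simpa [this] using by rw [ha y hy, hb y hy, add_zero]
  zero_mem' := by intro y hy; simp
  smul_mem' := by
    intro r x hx y hy
    have : ∑ j, (r • x) j * y j = r * ∑ j, x j * y j := by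
      rw [Finset.mul_sum]; simp [mul_assoc]
    rw [this, hx y hy, mul_zero]

/-- Dual of an arbitrary set of words with respect to the standard bilinear form. -/
def dualSet {S ι : Type} [CommRing S] [Fintype ι] (s : Set (ι → S)) : Set (ι → S) :=
  {x | ∀ y ∈ s, ∑ j, x j * y j = 0}

/-- The Gray map `φ : R^n → 𝔽_q^{en}` determined by the algebra maps `σ_i : R → 𝔽_q`
and the matrix `M`: it sends `(r_0, …, r_{n−1})` to the concatenation of the row
vectors `(σ_1(r_j), …, σ_e(r_j))·M`. -/
def grayMap {F : Type} [Field F] {e n : ℕ}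
    (σ : Fin e → (Rring F e →ₐ[F] F)) (M : Matrix (Fin e) (Fin e) F)
    (r : Fin n → Rring F e) : Fin n × Fin e → F :=
  fun jk => ∑ i, σ i (r jk.1) * M i jk.2

/-- The `i`-th component code of a linear code `C ⊆ R^n`: the image of `C` under the
map applying `σ_i` to each coordinate. -/
def compCode {F : Type} [Field F] {e n : ℕ}
    (σi : Rring F e →ₐ[F] F) (C : Submodule (Rring F e) (Fin n → Rring F e)) :
    Submodule F (Fin n → F) :=
  Submodule.map (σi.toLinearMap.compLeft (Fin n)) (C.restrictScalars F)

/-- The cyclic shift `(c_0, …, c_{n−1}) ↦ (c_{n−1}, c_0, …, c_{n−2})`. -/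
def cyclicShift {S : Type} {n : ℕ} [NeZero n] (c : Fin n → S) : Fin n → S :=
  fun j => c (j - 1)

/-- The identification of `S^n` with `S[x]/⟨x^n − 1⟩`,
`(c_0, …, c_{n−1}) ↦ c_0 + c_1 x + ⋯ + c_{n−1} x^{n−1}`. -/
def toPoly {S : Type} [CommRing S] {n : ℕ} (c : Fin n → S) :
    Polynomial S ⧸ Ideal.span {(X : Polynomial S) ^ n - 1} :=
  Ideal.Quotient.mk _ (∑ j : Fin n, Polynomial.C (c j) * X ^ (j : ℕ))

end



noncomputable section

namespace GrayAux

variable {F : Type} [Field F] {e : ℕ}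

lemma fmonic (he : e ≠ 0) : ((X : Polynomial F) ^ e - 1).Monic := by
  simpa using monic_X_pow_sub_C (1 : F) he

lemma sigma_mk {a : F} (σi : Rring F e →ₐ[F] F)
    (hσi : σi (AdjoinRoot.root ((X : Polynomial F) ^ e - 1)) = a) (p : Polynomial F) :
    σi (AdjoinRoot.mk _ p) = p.eval a := by
  rw [← AdjoinRoot.aeval_eq, ← Polynomial.aeval_algHom_apply, hσi, Polynomial.coe_aeval_eq_eval]

lemma prod_dvd_of_roots (α : Fin e → F) (hα : Function.Injective α) {p : Polynomial F}
    (hp : p ≠ 0) (h : ∀ i, p.eval (α i) = 0) : (∏ i, (X - C (α i))) ∣ p := by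
  have h1 : (∏ i, (X - C (α i))) = ((Finset.univ.val.map α).map fun a => X - C a).prod := by
    rw [Multiset.map_map]; rfl
  rw [h1, Multiset.prod_X_sub_C_dvd_iff_le_roots hp]
  refine (Multiset.le_iff_subset (Multiset.Nodup.map hα Finset.univ.2)).2 ?_
  intro a ha
  obtain ⟨i, _, rfl⟩ := Multiset.mem_map.1 ha
  exact (Polynomial.mem_roots hp).2 (h i)

lemma natDegree_f (he : e ≠ 0) : ((X : Polynomial F) ^ e - 1).natDegree = e := by
  have : ((X : Polynomial F) ^ e - 1) = X ^ e - C 1 := by simp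
  rw [this, natDegree_X_pow_sub_C]

lemma prod_eq (he : e ≠ 0) (α : Fin e → F) (hα : Function.Injective α)
    (hroot : ∀ i, α i ^ e = 1) :
    ((X : Polynomial F) ^ e - 1) = ∏ i, (X - C (α i)) := by
  have hf := fmonic (F := F) he
  have hfne : ((X : Polynomial F) ^ e - 1) ≠ 0 := hf.ne_zero
  have hdvd := prod_dvd_of_roots α hα hfne (fun i => by simp [hroot i])
  have hg : (∏ i, (X - C (α i)) : Polynomial F).Monic :=
    monic_prod_of_monic _ _ fun i _ => monic_X_sub_C _
  obtain ⟨c, hc⟩ := hdvd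
  have hcm : c.Monic := by
    have := hf
    rw [hc] at this
    exact hg.of_mul_monic_left this
  have hdeg : c.natDegree = 0 := by
    have h1 : ((X : Polynomial F) ^ e - 1).natDegree = e := natDegree_f he
    have h2 : (∏ i, (X - C (α i)) : Polynomial F).natDegree = e := by
      rw [Polynomial.natDegree_prod _ _ fun i _ => X_sub_C_ne_zero _]
      simp
    rw [hc, Polynomial.natDegree_mul hg.ne_zero hcm.ne_zero, h2] at h1
    omega
  have : c = 1 := hcm.natDegree_eq_zero.1 hdeg
  rw [hc, this, mul_one]

lemma joint_inj (he : e ≠ 0) (α : Fin e → F) (hα : Function.Injective α)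
    (hroot : ∀ i, α i ^ e = 1) (σ : Fin e → (Rring F e →ₐ[F] F))
    (hσ : ∀ i, σ i (AdjoinRoot.root ((X : Polynomial F) ^ e - 1)) = α i)
    (r : Rring F e) (h : ∀ i, σ i r = 0) : r = 0 := by
  obtain ⟨p, rfl⟩ := AdjoinRoot.mk_surjective r
  by_cases hp : p = 0
  · simp [hp]
  rw [AdjoinRoot.mk_eq_zero]
  have hev : ∀ i, p.eval (α i) = 0 := fun i => by
    rw [← sigma_mk (σ i) (hσ i) p]; exact h i
  rw [prod_eq he α hα hroot]
  exact prod_dvd_of_roots α hα hp hev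

lemma finrank_R (he : e ≠ 0) : Module.finrank F (Rring F e) = e := by
  haveI := Module.Finite.of_basis (AdjoinRoot.powerBasis' (fmonic (F := F) he)).basis
  rw [(AdjoinRoot.powerBasis' (fmonic (F := F) he)).finrank, AdjoinRoot.powerBasis'_dim]
  exact natDegree_f he

lemma sigma_surj (he : e ≠ 0) (α : Fin e → F) (hα : Function.Injective α)
    (hroot : ∀ i, α i ^ e = 1) (σ : Fin e → (Rring F e →ₐ[F] F))
    (hσ : ∀ i, σ i (AdjoinRoot.root ((X : Polynomial F) ^ e - 1)) = α i)
    (w : Fin e → F) : ∃ r : Rring F e, ∀ i, σ i r = w i := by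
  haveI : Module.Finite F (Rring F e) :=
    Module.Finite.of_basis (AdjoinRoot.powerBasis' (fmonic (F := F) he)).basis
  set L : Rring F e →ₗ[F] (Fin e → F) := LinearMap.pi fun i => (σ i).toLinearMap with hL
  have hinj : Function.Injective L := by
    rw [← LinearMap.ker_eq_bot, LinearMap.ker_eq_bot']
    intro r hr
    exact joint_inj he α hα hroot σ hσ r fun i => congrFun hr i
  have hsurj : Function.Surjective L := by
    rw [← LinearMap.injective_iff_surjective_of_finrank_eq_finrank
      (by rw [finrank_R he, Module.finrank_fin_fun F])]
    exact hinj
  obtain ⟨r, hr⟩ := hsurj w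
  exact ⟨r, fun i => congrFun hr i⟩

lemma vandermonde_zero (α : Fin e → F) (hα : Function.Injective α)
    (β : Fin e → F) (h : ∀ m : Fin e, ∑ i, α i ^ (m : ℕ) * β i = 0) : β = 0 := by
  have hdet : (Matrix.vandermonde α).det ≠ 0 := by
    rw [Matrix.det_vandermonde]
    refine Finset.prod_ne_zero_iff.2 fun i _ => Finset.prod_ne_zero_iff.2 fun j hj => ?_
    exact sub_ne_zero.2 fun hc => (Finset.mem_Ioi.1 hj).ne' (hα hc)
  have hdet' : ((Matrix.vandermonde α).transpose).det ≠ 0 := by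
    rwa [Matrix.det_transpose]
  have hmul : (Matrix.vandermonde α).transpose.mulVec β = 0 := by
    funext m
    simpa [Matrix.mulVec, dotProduct, Matrix.vandermonde] using h m
  have hinj : Function.Injective ((Matrix.vandermonde α).transpose.mulVec) :=
    Matrix.mulVec_injective_iff_isUnit.2 ((Matrix.isUnit_iff_isUnit_det _).2
      (isUnit_iff_ne_zero.2 hdet'))
  exact hinj (by rw [hmul, Matrix.mulVec_zero])

lemma key_dot (γ : F) (M : Matrix (Fin e) (Fin e) F)
    (hM : M * M.transpose = γ • (1 : Matrix (Fin e) (Fin e) F)) (a b : Fin e → F) :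
    ∑ k, (∑ i, a i * M i k) * (∑ i, b i * M i k) = γ * ∑ i, a i * b i := by
  have h1 : ∀ k, (∑ i, a i * M i k) = Matrix.vecMul a M k := by
    intro k; simp [Matrix.vecMul, dotProduct]
  have h2 : ∀ k, (∑ i, b i * M i k) = (M.transpose.mulVec b) k := by
    intro k; simp [Matrix.mulVec, dotProduct, Matrix.transpose, mul_comm]
  calc ∑ k, (∑ i, a i * M i k) * (∑ i, b i * M i k)
      = dotProduct (Matrix.vecMul a M) (M.transpose.mulVec b) :=
        Finset.sum_congr rfl fun k _ => by rw [h1, h2]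
    _ = dotProduct a (M.mulVec (M.transpose.mulVec b)) :=
        (Matrix.dotProduct_mulVec a M _).symm
    _ = γ * ∑ i, a i * b i := by
        rw [Matrix.mulVec_mulVec, hM, Matrix.smul_mulVec, Matrix.one_mulVec,
          dotProduct_smul]
        simp [dotProduct, Finset.mul_sum]

end GrayAux

namespace GrayAux

lemma mem_dualCode {S ι : Type} [CommRing S] [Fintype ι] {C : Submodule S (ι → S)} {x : ι → S} :
    x ∈ dualCode C ↔ ∀ y ∈ C, ∑ j, x j * y j = 0 := Iff.rfl

lemma mem_dualSet {S ι : Type} [CommRing S] [Fintype ι] {s : Set (ι → S)} {x : ι → S} :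
    x ∈ dualSet s ↔ ∀ y ∈ s, ∑ j, x j * y j = 0 := Iff.rfl

lemma gray_dot {F : Type} [Field F] {e n : ℕ} (σ : Fin e → (Rring F e →ₐ[F] F))
    (γ : F) (M : Matrix (Fin e) (Fin e) F)
    (hM : M * M.transpose = γ • (1 : Matrix (Fin e) (Fin e) F))
    (x y : Fin n → Rring F e) :
    ∑ jk : Fin n × Fin e, grayMap σ M x jk * grayMap σ M y jk
      = γ * ∑ i, σ i (∑ j, x j * y j) := by
  rw [Fintype.sum_prod_type]
  have h1 : ∀ j : Fin n, ∑ k, grayMap σ M x (j, k) * grayMap σ M y (j, k)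
      = γ * ∑ i, σ i (x j) * σ i (y j) := fun j =>
    key_dot γ M hM (fun i => σ i (x j)) (fun i => σ i (y j))
  rw [Finset.sum_congr rfl fun j _ => h1 j, ← Finset.mul_sum, Finset.sum_comm]
  congr 1
  refine Finset.sum_congr rfl fun i _ => ?_
  rw [map_sum]
  exact Finset.sum_congr rfl fun j _ => (map_mul _ _ _).symm

end GrayAux

end

/-- For a linear code `C` of length `n` over `R = 𝔽_q[u]/⟨u^e − 1⟩`,
the Gray image of the dual code is the dual of the Gray image:
`φ(C^⊥) = (φ(C))^⊥`. -/
theorem grayMap_dualCode_eq_dualSet_grayMap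
    {F : Type} [Field F] [Fintype F] (e n : ℕ) (he : 2 ≤ e)
    (hdvd : e ∣ Fintype.card F - 1)
    (α : Fin e → F) (hα : Function.Injective α) (hroot : ∀ i, α i ^ e = 1)
    (σ : Fin e → (Rring F e →ₐ[F] F))
    (hσ : ∀ i, σ i (AdjoinRoot.root ((X : Polynomial F) ^ e - 1)) = α i)
    (γ : F) (hγ : γ ≠ 0) (M : Matrix (Fin e) (Fin e) F)
    (hM : M * M.transpose = γ • (1 : Matrix (Fin e) (Fin e) F))
    (C : Submodule (Rring F e) (Fin n → Rring F e)) :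
    grayMap σ M '' (dualCode C : Set (Fin n → Rring F e)) =
      dualSet (grayMap σ M '' (C : Set (Fin n → Rring F e))) :=  by
  have hes : e ≠ 0 := by omega
  have hinj := GrayAux.joint_inj hes α hα hroot σ hσ
  have hdot := GrayAux.gray_dot (n := n) σ γ M hM
  have hforward : ∀ x : Fin n → Rring F e, x ∈ dualCode C →
      grayMap σ M x ∈ dualSet (grayMap σ M '' (C : Set (Fin n → Rring F e))) := by
    intro x hx
    rw [GrayAux.mem_dualSet]
    rintro z ⟨y, hy, rfl⟩
    rw [hdot x y, GrayAux.mem_dualCode.1 hx y hy]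
    simp
  have hback : ∀ x : Fin n → Rring F e,
      grayMap σ M x ∈ dualSet (grayMap σ M '' (C : Set (Fin n → Rring F e))) →
        x ∈ dualCode C := by
    intro x hx
    rw [GrayAux.mem_dualSet] at hx
    rw [GrayAux.mem_dualCode]
    intro y hy
    have hm : ∀ m : Fin e, ∑ i, α i ^ (m : ℕ) * σ i (∑ j, x j * y j) = 0 := by
      intro m
      have hy' : (AdjoinRoot.root ((X : Polynomial F) ^ e - 1) ^ (m : ℕ)) • y ∈ C :=
        C.smul_mem _ hy
      have h0 := hx _ ⟨_, hy', rfl⟩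
      rw [hdot] at h0
      have hsum : ∑ j, x j * ((AdjoinRoot.root ((X : Polynomial F) ^ e - 1) ^ (m : ℕ)) • y) j
          = AdjoinRoot.root ((X : Polynomial F) ^ e - 1) ^ (m : ℕ) * ∑ j, x j * y j := by
        rw [Finset.mul_sum]
        refine Finset.sum_congr rfl fun j _ => ?_
        simp only [Pi.smul_apply, smul_eq_mul]
        ring
      rw [hsum] at h0
      have h1 : ∑ i, σ i (AdjoinRoot.root ((X : Polynomial F) ^ e - 1) ^ (m : ℕ)
            * ∑ j, x j * y j)
          = ∑ i, α i ^ (m : ℕ) * σ i (∑ j, x j * y j) := by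
        refine Finset.sum_congr rfl fun i _ => ?_
        rw [map_mul, map_pow, hσ]
      rw [h1] at h0
      exact (mul_eq_zero.1 h0).resolve_left hγ
    have hβ := GrayAux.vandermonde_zero α hα _ hm
    exact hinj _ fun i => congrFun hβ i
  have hsurjσ := GrayAux.sigma_surj hes α hα hroot σ hσ
  have hMinv : ((γ⁻¹ • M.transpose) * M) = 1 := by
    rw [mul_eq_one_comm, Matrix.mul_smul, hM, smul_smul, inv_mul_cancel₀ hγ, one_smul]
  have hgraysurj : ∀ z : Fin n × Fin e → F, ∃ x, grayMap σ M x = z := by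
    intro z
    have hchoice : ∀ j : Fin n, ∃ rj : Rring F e, ∀ i,
        σ i rj = Matrix.vecMul (fun k => z (j, k)) (γ⁻¹ • M.transpose) i :=
      fun j => hsurjσ _
    choose r hr using hchoice
    refine ⟨r, funext fun jk => ?_⟩
    obtain ⟨j, k⟩ := jk
    have h2 : grayMap σ M r (j, k) = Matrix.vecMul (fun i => σ i (r j)) M k := by
      simp [grayMap, Matrix.vecMul, dotProduct]
    rw [h2, funext (hr j), Matrix.vecMul_vecMul, hMinv, Matrix.vecMul_one]
  ext z
  constructor
  · rintro ⟨x, hx, rfl⟩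
    exact hforward x hx
  · intro hz
    obtain ⟨x, rfl⟩ := hgraysurj z
    exact ⟨x, hback x hz, rfl⟩
end

section
/- Let C be a linear code of length n over R. Then φ(C) is a self-dual code of length en over 𝔽_q (i.e., φ(C) = (φ(C))^⊥) if and only if C is a self-dual code over R (i.e., C = C^⊥). -/
open Polynomial

/-- For a linear code `C` of length `n` over `R = 𝔽_q[u]/⟨u^e − 1⟩`,
the Gray image `φ(C)` is a self-dual code of length `en` over `𝔽_q` if and only if
`C` is a self-dual code over `R`. -/
theorem grayMap_selfDual_iff_selfDual
    {F : Type} [Field F] [Fintype F] (e n : ℕ) (he : 2 ≤ e)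
    (hdvd : e ∣ Fintype.card F - 1)
    (α : Fin e → F) (hα : Function.Injective α) (hroot : ∀ i, α i ^ e = 1)
    (σ : Fin e → (Rring F e →ₐ[F] F))
    (hσ : ∀ i, σ i (AdjoinRoot.root ((X : Polynomial F) ^ e - 1)) = α i)
    (γ : F) (hγ : γ ≠ 0) (M : Matrix (Fin e) (Fin e) F)
    (hM : M * M.transpose = γ • (1 : Matrix (Fin e) (Fin e) F))
    (C : Submodule (Rring F e) (Fin n → Rring F e)) :
    grayMap σ M '' (C : Set (Fin n → Rring F e)) =
        dualSet (grayMap σ M '' (C : Set (Fin n → Rring F e))) ↔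
      C = dualCode C := by
  classical
  set f : Polynomial F := (X : Polynomial F) ^ e - 1 with hf
  have he0 : e ≠ 0 := by omega
  have hmonic : f.Monic := by
    simpa [hf, Polynomial.C_1] using Polynomial.monic_X_pow_sub_C (1 : F) he0
  have hfne : f ≠ 0 := hmonic.ne_zero
  have hdeg : f.natDegree = e := by
    have h := Polynomial.natDegree_X_pow_sub_C (n := e) (r := (1 : F))
    simpa [hf] using h
  -- f is the product of the (X - α i)
  have hprodf : f = ∏ i : Fin e, (X - Polynomial.C (α i)) := by
    have hdvd1 : ∀ i : Fin e, (X - Polynomial.C (α i)) ∣ f := by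
      intro i
      refine Polynomial.dvd_iff_isRoot.mpr ?_
      simp [hf, Polynomial.IsRoot, hroot i]
    have hpd : (∏ i : Fin e, (X - Polynomial.C (α i))) ∣ f :=
      Fintype.prod_dvd_of_coprime (Polynomial.pairwise_coprime_X_sub_C hα) hdvd1
    obtain ⟨c, hc⟩ := hpd
    have hPmonic : (∏ i : Fin e, (X - Polynomial.C (α i))).Monic :=
      Polynomial.monic_prod_of_monic _ _ fun i _ => Polynomial.monic_X_sub_C _
    have hcmonic : c.Monic := by
      have := hmonic
      rw [hc] at this
      exact hPmonic.of_mul_monic_left this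
    have hPdeg : (∏ i : Fin e, (X - Polynomial.C (α i))).natDegree = e := by
      rw [Polynomial.natDegree_prod _ _ fun i _ => Polynomial.X_sub_C_ne_zero (α i)]
      simp
    have hcdeg : c.natDegree = 0 := by
      have := hdeg
      rw [hc, Polynomial.natDegree_mul (hPmonic.ne_zero) (hcmonic.ne_zero), hPdeg] at this
      omega
    have : c = 1 := (hcmonic.natDegree_eq_zero).mp hcdeg
    rw [hc, this, mul_one]
  -- evaluation formula for σ
  have hσeval : ∀ (i : Fin e) (p : Polynomial F),
      σ i (AdjoinRoot.mk f p) = Polynomial.aeval (α i) p := by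
    intro i p
    have hr : Polynomial.aeval (α i) f = 0 := by
      simp [hf, hroot i]
    have : σ i = AdjoinRoot.liftAlgHom f (Algebra.ofId F F) (α i) (by simp [hf, hroot i]) := by
      apply AdjoinRoot.algHom_ext
      rw [hσ i, AdjoinRoot.liftAlgHom_root]
    rw [this, AdjoinRoot.liftAlgHom_mk, Polynomial.aeval_def, Algebra.toRingHom_ofId]
  -- the semisimple decomposition map Σ
  set Sl : Rring F e →ₗ[F] (Fin e → F) :=
    LinearMap.pi (fun i => (σ i).toLinearMap) with hSl
  have hSapp : ∀ (a : Rring F e) (i : Fin e), Sl a i = σ i a := fun a i => rfl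
  have hSinj : Function.Injective Sl := by
    rw [← LinearMap.ker_eq_bot, LinearMap.ker_eq_bot']
    intro a ha
    obtain ⟨p, rfl⟩ := AdjoinRoot.mk_surjective a
    have hzero : ∀ i : Fin e, Polynomial.aeval (α i) p = 0 := by
      intro i
      rw [← hσeval i p, ← hSapp]
      rw [ha]; rfl
    have hdvd1 : ∀ i : Fin e, (X - Polynomial.C (α i)) ∣ p := by
      intro i
      refine Polynomial.dvd_iff_isRoot.mpr ?_
      simpa [Polynomial.IsRoot, Polynomial.aeval_def, Polynomial.eval₂_eq_eval_map] using hzero i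
    have hpd : (∏ i : Fin e, (X - Polynomial.C (α i))) ∣ p :=
      Fintype.prod_dvd_of_coprime (Polynomial.pairwise_coprime_X_sub_C hα) hdvd1
    rw [← hprodf] at hpd
    exact AdjoinRoot.mk_eq_zero.mpr hpd
  -- finite dimensionality
  haveI : Module.Finite F (Rring F e) :=
    Module.Finite.of_basis (AdjoinRoot.powerBasis hfne).basis
  have hfinrank : Module.finrank F (Rring F e) = e := by
    rw [(AdjoinRoot.powerBasis hfne).finrank, AdjoinRoot.powerBasis_dim, hdeg]
  have hSsurj : Function.Surjective Sl :=
    (LinearMap.injective_iff_surjective_of_finrank_eq_finrank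
      (f := Sl) (by rw [hfinrank, Module.finrank_pi]; simp)).mp hSinj
  -- the Gray map as a linear map
  set phil : (Fin n → Rring F e) →ₗ[F] (Fin n × Fin e → F) :=
    { toFun := grayMap σ M
      map_add' := by
        intro r s
        funext jk
        simp only [grayMap, Pi.add_apply, map_add, add_mul, Finset.sum_add_distrib]
      map_smul' := by
        intro c r
        funext jk
        simp only [grayMap, Pi.smul_apply, map_smul, RingHom.id_apply, smul_eq_mul,
          Finset.mul_sum, mul_assoc] } with hphil
  have hφinj : Function.Injective phil := by
    rw [← LinearMap.ker_eq_bot, LinearMap.ker_eq_bot']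
    intro r hr
    funext j
    have hv : Matrix.vecMul (fun i => σ i (r j)) M = 0 := by
      funext k
      have h := congrFun hr (j, k)
      simpa [hphil, grayMap, Matrix.vecMul, dotProduct] using h
    have h2 : γ • (fun i => σ i (r j)) = 0 := by
      have h3 : Matrix.vecMul (fun i => σ i (r j)) (M * M.transpose) = 0 := by
        rw [← Matrix.vecMul_vecMul, hv, Matrix.zero_vecMul]
      rw [hM] at h3
      rw [← h3]; funext k
      simp [Matrix.vecMul, dotProduct, Matrix.one_apply, mul_comm]
    have h3 : Sl (r j) = Sl 0 := by
      rw [map_zero]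
      funext i
      have h4 := congrFun h2 i
      simp only [Pi.smul_apply, smul_eq_mul, Pi.zero_apply] at h4
      rcases mul_eq_zero.mp h4 with h' | h'
      · exact absurd h' hγ
      · exact h'
    exact hSinj h3
  haveI : Module.Finite F (Fin n → Rring F e) := Module.Finite.pi
  have hφsurj : Function.Surjective phil :=
    (LinearMap.injective_iff_surjective_of_finrank_eq_finrank
      (f := phil) (by
        rw [Module.finrank_pi_fintype, Module.finrank_pi]
        simp [hfinrank, Fintype.card_prod])).mp hφinj
  -- key bilinear identity
  have hinner : ∀ r s : Fin n → Rring F e,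
      (∑ jk : Fin n × Fin e, grayMap σ M r jk * grayMap σ M s jk)
        = γ * ∑ i, σ i (∑ j, r j * s j) := by
    intro r s
    rw [Fintype.sum_prod_type]
    have hstep : ∀ j : Fin n,
        (∑ k, grayMap σ M r (j, k) * grayMap σ M s (j, k))
          = γ * ∑ i, σ i (r j) * σ i (s j) := by
      intro j
      have hdot : dotProduct (Matrix.vecMul (fun i => σ i (r j)) M) (Matrix.vecMul (fun i => σ i (s j)) M)
          = γ * dotProduct (fun i => σ i (r j)) (fun i => σ i (s j)) := by
        have hswap : Matrix.vecMul (fun i => σ i (s j)) M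
            = Matrix.mulVec M.transpose (fun i => σ i (s j)) :=
          (Matrix.mulVec_transpose M _).symm
        rw [hswap, Matrix.dotProduct_mulVec, Matrix.vecMul_vecMul, hM]
        have hone : (Matrix.vecMul (fun i => σ i (r j)) (γ • (1 : Matrix (Fin e) (Fin e) F)))
            = γ • (fun i => σ i (r j)) := by
          funext k; simp [Matrix.vecMul, dotProduct, Matrix.one_apply, mul_comm]
        rw [hone, smul_dotProduct, smul_eq_mul]
      simpa [grayMap, Matrix.vecMul, dotProduct] using hdot
    rw [Finset.sum_congr rfl (fun j _ => hstep j), ← Finset.mul_sum, Finset.sum_comm]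
    congr 1
    refine Finset.sum_congr rfl fun i _ => ?_
    rw [map_sum]
    exact Finset.sum_congr rfl fun j _ => (map_mul _ _ _).symm
  -- the fundamental equivalence
  have hD : ∀ r : Fin n → Rring F e,
      (grayMap σ M r ∈ dualSet (grayMap σ M '' (C : Set (Fin n → Rring F e))))
        ↔ r ∈ dualCode C := by
    intro r
    constructor
    · intro h s hs
      have key : Sl (∑ j, r j * s j) = Sl 0 := by
        rw [map_zero]
        funext i0
        obtain ⟨t, ht⟩ := hSsurj (Pi.single i0 1)
        have hts : t • s ∈ C := C.smul_mem t hs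
        have h0 := h (grayMap σ M (t • s)) ⟨t • s, hts, rfl⟩
        rw [hinner] at h0
        have hsum : (∑ j, r j * (t • s) j) = t * ∑ j, r j * s j := by
          rw [Finset.mul_sum]
          exact Finset.sum_congr rfl fun j _ => by
            simp [smul_eq_mul, mul_left_comm]
        rw [hsum] at h0
        have h1 : (∑ i, σ i t * σ i (∑ j, r j * s j)) = 0 := by
          rcases mul_eq_zero.mp h0 with h' | h'
          · exact absurd h' hγ
          · rw [← h']
            exact Finset.sum_congr rfl fun i _ => (map_mul _ _ _).symm
        have h2 : ∀ i, σ i t = (Pi.single i0 1 : Fin e → F) i := fun i => by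
          rw [← hSapp, ht]
        have h1' : (∑ i, (Pi.single i0 1 : Fin e → F) i * σ i (∑ j, r j * s j)) = 0 := by
          rw [← h1]
          exact Finset.sum_congr rfl fun i _ => by rw [h2 i]
        have hgoal : σ i0 (∑ j, r j * s j) = 0 := by
          simpa [Pi.single_apply] using h1'
        rw [hSapp, hgoal]
        rfl
      exact hSinj key
    · intro h y hy
      obtain ⟨s, hs, rfl⟩ := hy
      rw [hinner, h s hs]
      simp
  constructor
  · intro hsd
    apply le_antisymm
    · intro r hr
      have hmem : grayMap σ M r ∈ dualSet (grayMap σ M '' (C : Set (Fin n → Rring F e))) := by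
        rw [← hsd]; exact Set.mem_image_of_mem _ hr
      exact (hD r).mp hmem
    · intro r hr
      have hmem : grayMap σ M r ∈ grayMap σ M '' (C : Set (Fin n → Rring F e)) := by
        rw [hsd]; exact (hD r).mpr hr
      obtain ⟨c, hc, hcr⟩ := hmem
      have : c = r := hφinj hcr
      exact this ▸ hc
  · intro hC
    ext x
    constructor
    · rintro ⟨r, hr, rfl⟩
      exact (hD r).mpr (hC ▸ hr)
    · intro hx
      obtain ⟨r, rfl⟩ := hφsurj x
      have hr : r ∈ dualCode C := (hD r).mp hx
      rw [← hC] at hr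
      exact Set.mem_image_of_mem _ hr
end

section
/- Let C be a linear code of length n over R with component codes C_1, …, C_e. Then for every i with 1 ≤ i ≤ e, the i-th component code of the dual code C^⊥ equals (C_i)^⊥; equivalently, C^⊥ = ⊕_{i=1}^e μ_i·C_i^⊥, i.e., C^⊥ consists exactly of the vectors Σ_{i=1}^e μ_i·ι(x_i) with x_i ∈ C_i^⊥, where ι : 𝔽_q^n → R^n is the coordinatewise inclusion of 𝔽_q into R. -/
open Polynomial

/-- For a linear code `C` of length `n` over `R = 𝔽_q[u]/⟨u^e − 1⟩`
with component codes `C_i`, the `i`-th component code of the dual `C^⊥` equals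
`(C_i)^⊥` for every `i`; equivalently, `C^⊥ = ⊕_{i=1}^e μ_i·C_i^⊥`, i.e. `C^⊥`
consists exactly of the vectors `∑ i, μ_i·ι(x_i)` with `x_i ∈ C_i^⊥`, where `ι` is
the coordinatewise inclusion of `𝔽_q` into `R`. -/
theorem dualCode_decomposition
    {F : Type} [Field F] [Fintype F] (e n : ℕ) (he : 2 ≤ e)
    (hdvd : e ∣ Fintype.card F - 1)
    (α : Fin e → F) (hα : Function.Injective α) (hroot : ∀ i, α i ^ e = 1)
    (σ : Fin e → (Rring F e →ₐ[F] F))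
    (hσ : ∀ i, σ i (AdjoinRoot.root ((X : Polynomial F) ^ e - 1)) = α i)
    (μ : Fin e → Rring F e)
    (hμ : ∀ i j, σ j (μ i) = if i = j then 1 else 0)
    (C : Submodule (Rring F e) (Fin n → Rring F e)) :
    (∀ i, compCode (σ i) (dualCode C) = dualCode (compCode (σ i) C)) ∧
      (dualCode C : Set (Fin n → Rring F e)) =
        {v | ∃ x : Fin e → Fin n → F,
          (∀ i, x i ∈ dualCode (compCode (σ i) C)) ∧
          v = ∑ i, μ i • fun j => algebraMap F (Rring F e) (x i j)} := by
  classical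
  have hne : ((X : Polynomial F) ^ e - 1) ≠ 0 := by
    have : ((X : Polynomial F) ^ e - 1).Monic := by
      simpa using Polynomial.monic_X_pow_sub_C (1 : F) (by omega : e ≠ 0)
    exact this.ne_zero
  haveI : FiniteDimensional F (Rring F e) := (AdjoinRoot.powerBasis hne).finite
  have hfr : Module.finrank F (Rring F e) = e := by
    rw [(AdjoinRoot.powerBasis hne).finrank]
    show ((X : Polynomial F) ^ e - 1).natDegree = e
    have h2 : ((X : Polynomial F) ^ e - 1) = X ^ e - Polynomial.C 1 := by simp
    rw [h2, Polynomial.natDegree_X_pow_sub_C]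
  set Φ : Rring F e →ₗ[F] (Fin e → F) := LinearMap.pi (fun i => (σ i).toLinearMap) with hΦ
  have hΦapp : ∀ r k, Φ r k = σ k r := fun r k => rfl
  have hsurj : Function.Surjective Φ := by
    intro x
    refine ⟨∑ i, x i • μ i, funext fun k => ?_⟩
    rw [hΦapp, map_sum]
    have : ∀ i : Fin e, σ k (x i • μ i) = if i = k then x i else 0 := by
      intro i
      rw [map_smul, hμ]
      by_cases h : i = k <;> simp [h]
    rw [Finset.sum_congr rfl fun i _ => this i]
    simp
  have hinj : ∀ r : Rring F e, (∀ i, σ i r = 0) → r = 0 := by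
    intro r hr
    have hd : Module.finrank F (Rring F e) = Module.finrank F (Fin e → F) := by
      rw [hfr, Module.finrank_pi]; simp
    have hI : Function.Injective Φ :=
      (LinearMap.injective_iff_surjective_of_finrank_eq_finrank hd).mpr hsurj
    apply hI
    ext k
    simp [hΦapp, hr k]
  have hzero : ∀ r : Rring F e, r = ∑ i, algebraMap F (Rring F e) (σ i r) * μ i := by
    intro r
    have h := hinj (r - ∑ i, algebraMap F (Rring F e) (σ i r) * μ i) (fun k => by
      rw [map_sub, map_sum]
      have : ∀ i : Fin e, σ k (algebraMap F (Rring F e) (σ i r) * μ i)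
          = if i = k then σ k r else 0 := by
        intro i
        rw [map_mul, AlgHom.commutes, hμ]
        by_cases h : i = k <;> simp [h]
      rw [Finset.sum_congr rfl fun i _ => this i]
      simp)
    exact sub_eq_zero.mp h
  -- key lemma 1
  have hkey : ∀ (i : Fin e) (x : Fin n → F), x ∈ dualCode (compCode (σ i) C) →
      (fun j => μ i * algebraMap F (Rring F e) (x j)) ∈ dualCode C := by
    intro i x hx y hy
    apply hinj
    intro k
    have h1 : σ k (∑ j, (μ i * algebraMap F (Rring F e) (x j)) * y j)
        = ∑ j, (if i = k then (1 : F) else 0) * (x j * σ k (y j)) := by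
      rw [map_sum]
      refine Finset.sum_congr rfl fun j _ => ?_
      rw [map_mul, map_mul, hμ, AlgHom.commutes]
      simp only [Algebra.algebraMap_self_apply]
      ring
    rw [h1]
    by_cases hik : i = k
    · subst hik
      simpa using hx (fun j => σ i (y j))
        (Submodule.mem_map.mpr ⟨y, (Submodule.restrictScalars_mem F C y).mpr hy, rfl⟩)
    · simp [hik]
  -- key lemma 2
  have hkey2 : ∀ v, v ∈ dualCode C → ∀ i,
      (fun j => σ i (v j)) ∈ dualCode (compCode (σ i) C) := by
    intro v hv i z hz
    obtain ⟨y, hy, rfl⟩ := Submodule.mem_map.mp hz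
    have hy' : y ∈ C := (Submodule.restrictScalars_mem F C y).mp hy
    have h0 := hv y hy'
    calc ∑ j, σ i (v j) * ((σ i).toLinearMap.compLeft (Fin n) y) j
        = σ i (∑ j, v j * y j) := by
          rw [map_sum]; exact Finset.sum_congr rfl fun j _ => (map_mul _ _ _).symm
      _ = 0 := by rw [h0, map_zero]
  have part1 : ∀ i, compCode (σ i) (dualCode C) = dualCode (compCode (σ i) C) := by
    intro i
    ext x
    constructor
    · intro hx
      obtain ⟨v, hv, rfl⟩ := Submodule.mem_map.mp hx
      exact hkey2 v ((Submodule.restrictScalars_mem F _ v).mp hv) i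
    · intro hx
      refine Submodule.mem_map.mpr ⟨fun j => μ i * algebraMap F (Rring F e) (x j),
        (Submodule.restrictScalars_mem F _ _).mpr (hkey i x hx), funext fun j => ?_⟩
      show σ i (μ i * algebraMap F (Rring F e) (x j)) = x j
      rw [map_mul, hμ, AlgHom.commutes]
      simp
  refine ⟨part1, ?_⟩
  ext v
  simp only [SetLike.mem_coe, Set.mem_setOf_eq]
  constructor
  · intro hv
    refine ⟨fun i j => σ i (v j), fun i => hkey2 v hv i, funext fun j => ?_⟩
    rw [Fintype.sum_apply]
    simp only [Pi.smul_apply, smul_eq_mul]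
    calc v j = ∑ i, algebraMap F (Rring F e) (σ i (v j)) * μ i := hzero (v j)
      _ = ∑ i, μ i * algebraMap F (Rring F e) (σ i (v j)) :=
          Finset.sum_congr rfl fun i _ => mul_comm _ _
  · rintro ⟨x, hx, rfl⟩
    apply Submodule.sum_mem
    intro i _
    have heq : (μ i • fun j => algebraMap F (Rring F e) (x i j))
        = fun j => μ i * algebraMap F (Rring F e) (x i j) := rfl
    rw [heq]
    exact hkey i (x i) (hx i)
end

section
/- Let C be a linear code of length n over R with component codes C_1, …, C_e. Then C is self-dual (C = C^⊥) if and only if C_i is self-dual (C_i = C_i^⊥ in 𝔽_q^n) for every i with 1 ≤ i ≤ e. -/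
open Polynomial

theorem mem_dualCode {S ι : Type} [CommRing S] [Fintype ι] (C : Submodule S (ι → S))
    (x : ι → S) : x ∈ dualCode C ↔ ∀ y ∈ C, ∑ j, x j * y j = 0 := Iff.rfl

theorem mem_compCode {F : Type} [Field F] {e n : ℕ}
    (σi : Rring F e →ₐ[F] F) (C : Submodule (Rring F e) (Fin n → Rring F e))
    (z : Fin n → F) :
    z ∈ compCode σi C ↔ ∃ y ∈ C, ∀ j, σi (y j) = z j := by
  constructor
  · rintro ⟨y, hy, rfl⟩
    exact ⟨y, hy, fun j => rfl⟩
  · rintro ⟨y, hy, h⟩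
    exact ⟨y, hy, funext h⟩

/-- A linear code `C` of length `n` over `R = 𝔽_q[u]/⟨u^e − 1⟩` with
component codes `C_1, …, C_e` is self-dual (`C = C^⊥`) if and only if every component
code `C_i` is self-dual in `𝔽_q^n`. -/
theorem selfDual_iff_components_selfDual
    {F : Type} [Field F] [Fintype F] (e n : ℕ) (he : 2 ≤ e)
    (hdvd : e ∣ Fintype.card F - 1)
    (α : Fin e → F) (hα : Function.Injective α) (hroot : ∀ i, α i ^ e = 1)
    (σ : Fin e → (Rring F e →ₐ[F] F))
    (hσ : ∀ i, σ i (AdjoinRoot.root ((X : Polynomial F) ^ e - 1)) = α i)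
    (C : Submodule (Rring F e) (Fin n → Rring F e)) :
    C = dualCode C ↔ ∀ i, compCode (σ i) C = dualCode (compCode (σ i) C) := by
  classical
  -- the combined map `r ↦ (σ i r)_i` is bijective
  have hbij : Function.Bijective (fun r : Rring F e => fun i => σ i r) := by
    have hdeg : ((X : Polynomial F) ^ e - 1).natDegree = e := by
      have : ((X : Polynomial F) ^ e - 1) = X ^ e - Polynomial.C 1 := by simp
      rw [this, Polynomial.natDegree_X_pow_sub_C]
    have hne : ((X : Polynomial F) ^ e - 1) ≠ 0 := by
      intro h
      rw [h] at hdeg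
      simp at hdeg
      omega
    have hσeval : ∀ i (p : Polynomial F), σ i (AdjoinRoot.mk _ p) = p.eval (α i) := by
      intro i p
      have h0 : aeval (α i) ((X : Polynomial F) ^ e - 1) = 0 := by
        simp [hroot i]
      have : σ i = AdjoinRoot.liftAlgHom _ (Algebra.ofId F F) (α i) (by simpa [aeval_def] using h0) := by
        apply AdjoinRoot.algHom_ext
        simp [hσ i, AdjoinRoot.liftAlgHom_root]
      rw [this]
      show AdjoinRoot.liftAlgHom _ (Algebra.ofId F F) (α i) (by simpa [aeval_def] using h0) (AdjoinRoot.mk _ p) = _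
      rw [AdjoinRoot.liftAlgHom_mk]
      simp [aeval_def, eval₂_eq_eval_map]
    have hsurj : Function.Surjective (fun r : Rring F e => fun i => σ i r) := by
      intro x
      refine ⟨AdjoinRoot.mk _ (Lagrange.interpolate Finset.univ α x), ?_⟩
      funext i
      show σ i (AdjoinRoot.mk _ _) = _
      rw [hσeval]
      exact Lagrange.eval_interpolate_at_node x (hα.injOn) (Finset.mem_univ i)
    let L : Rring F e →ₗ[F] (Fin e → F) :=
      { toFun := fun r => fun i => σ i r,
        map_add' := by intro a b; funext i; simp,
        map_smul' := by intro c a; funext i; simp }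
    haveI : Module.Finite F (Rring F e) :=
      Module.Finite.of_basis (AdjoinRoot.powerBasis hne).basis
    have hdim : Module.finrank F (Rring F e) = Module.finrank F (Fin e → F) := by
      rw [(AdjoinRoot.powerBasis hne).finrank, Module.finrank_fin_fun,
        AdjoinRoot.powerBasis_dim]
      exact hdeg
    exact ⟨(LinearMap.injective_iff_surjective_of_finrank_eq_finrank (f := L) hdim).mpr hsurj,
      hsurj⟩
  have hinj : ∀ r s : Rring F e, (∀ i, σ i r = σ i s) → r = s := by
    intro r s h
    exact hbij.1 (funext h)
  have hinj0 : ∀ r : Rring F e, (∀ i, σ i r = 0) → r = 0 := by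
    intro r h
    exact hinj r 0 (by simp [h])
  have hsurj := hbij.2
  -- idempotent-like elements
  have hidem : ∀ i : Fin e, ∃ ε : Rring F e, ∀ k, σ k ε = if k = i then 1 else 0 := by
    intro i
    obtain ⟨ε, hε⟩ := hsurj (fun k => if k = i then 1 else 0)
    exact ⟨ε, fun k => congrFun hε k⟩
  choose ε hε using hidem
  -- inner products component-wise
  have hip : ∀ (x y : Fin n → Rring F e) (i : Fin e),
      σ i (∑ j, x j * y j) = ∑ j, σ i (x j) * σ i (y j) := by
    intro x y i
    rw [map_sum]
    simp
  -- membership in `C` is determined by the components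
  have hmem : ∀ x : Fin n → Rring F e,
      x ∈ C ↔ ∀ i, (fun j => σ i (x j)) ∈ compCode (σ i) C := by
    intro x
    constructor
    · intro hx i
      exact (mem_compCode _ _ _).mpr ⟨x, hx, fun j => rfl⟩
    · intro h
      choose y hyC hy using fun i => (mem_compCode _ _ _).mp (h i)
      have hxeq : x = ∑ i, ε i • y i := by
        funext j
        apply hinj
        intro k
        have h1 : σ k ((∑ i, ε i • y i) j) = ∑ i, σ k (ε i) * σ k (y i j) := by
          simp [Finset.sum_apply, map_sum]
        rw [h1, Finset.sum_eq_single k]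
        · rw [hε k k, if_pos rfl, one_mul, hy k j]
        · intro b _ hb
          rw [hε b k, if_neg (Ne.symm hb), zero_mul]
        · intro hk
          exact absurd (Finset.mem_univ k) hk
      rw [hxeq]
      exact Submodule.sum_mem _ fun i _ => Submodule.smul_mem _ _ (hyC i)
  -- components of the dual are the duals of the components
  have hcomp_dual : ∀ i, compCode (σ i) (dualCode C) = dualCode (compCode (σ i) C) := by
    intro i
    apply le_antisymm
    · intro z hz
      obtain ⟨x, hx, hxz⟩ := (mem_compCode _ _ _).mp hz
      rw [mem_dualCode]
      intro z' hz'
      obtain ⟨y, hy, hyz'⟩ := (mem_compCode _ _ _).mp hz'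
      have h0 : ∑ j, x j * y j = 0 := hx y hy
      calc ∑ j, z j * z' j = ∑ j, σ i (x j) * σ i (y j) := by
            refine Finset.sum_congr rfl fun j _ => ?_
            rw [hxz j, hyz' j]
        _ = σ i (∑ j, x j * y j) := (hip x y i).symm
        _ = 0 := by rw [h0, map_zero]
    · intro z hz
      choose w hw using fun j : Fin n => hsurj (fun k => if k = i then z j else 0)
      have hwk : ∀ j k, σ k (w j) = if k = i then z j else 0 := by
        intro j k
        exact congrFun (hw j) k
      refine (mem_compCode _ _ _).mpr ⟨w, ?_, ?_⟩
      · rw [mem_dualCode]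
        intro y hy
        apply hinj0
        intro k
        rw [hip w y k]
        by_cases hk : k = i
        · subst hk
          have hyi : (fun j => σ k (y j)) ∈ compCode (σ k) C :=
            (mem_compCode _ _ _).mpr ⟨y, hy, fun j => rfl⟩
          have := hz _ hyi
          calc ∑ j, σ k (w j) * σ k (y j) = ∑ j, z j * σ k (y j) := by
                refine Finset.sum_congr rfl fun j _ => ?_
                rw [hwk j k, if_pos rfl]
            _ = 0 := this
        · refine Finset.sum_eq_zero fun j _ => ?_
          rw [hwk j k, if_neg hk, zero_mul]
      · intro j
        rw [hwk j i, if_pos rfl]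
  constructor
  · intro hC i
    calc compCode (σ i) C = compCode (σ i) (dualCode C) := by rw [← hC]
      _ = dualCode (compCode (σ i) C) := hcomp_dual i
  · intro h
    apply le_antisymm
    · intro x hx
      rw [mem_dualCode]
      intro y hy
      apply hinj0
      intro i
      rw [hip x y i]
      have hxi : (fun j => σ i (x j)) ∈ compCode (σ i) C :=
        (mem_compCode _ _ _).mpr ⟨x, hx, fun j => rfl⟩
      have hyi : (fun j => σ i (y j)) ∈ compCode (σ i) C :=
        (mem_compCode _ _ _).mpr ⟨y, hy, fun j => rfl⟩
      have hxd : (fun j => σ i (x j)) ∈ dualCode (compCode (σ i) C) := by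
        rw [← h i]; exact hxi
      exact hxd _ hyi
    · intro x hx
      rw [hmem x]
      intro i
      have : (fun j => σ i (x j)) ∈ compCode (σ i) (dualCode C) :=
        (mem_compCode _ _ _).mpr ⟨x, hx, fun j => rfl⟩
      rw [hcomp_dual i, ← h i] at this
      exact this
end

section
/- Let C be a linear code of length n over R with component codes C_1, …, C_e. Then C is a cyclic code over R if and only if C_i is a cyclic code of length n over 𝔽_q for every i with 1 ≤ i ≤ e. -/
open Polynomial

/-- A linear code `C` of length `n` over `R = 𝔽_q[u]/⟨u^e − 1⟩` with
component codes `C_1, …, C_e` is cyclic if and only if every component code `C_i` is a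
cyclic code of length `n` over `𝔽_q`. -/
theorem cyclic_iff_components_cyclic
    {F : Type} [Field F] [Fintype F] (e n : ℕ) [NeZero n] (he : 2 ≤ e)
    (hdvd : e ∣ Fintype.card F - 1)
    (α : Fin e → F) (hα : Function.Injective α) (hroot : ∀ i, α i ^ e = 1)
    (σ : Fin e → (Rring F e →ₐ[F] F))
    (hσ : ∀ i, σ i (AdjoinRoot.root ((X : Polynomial F) ^ e - 1)) = α i)
    (C : Submodule (Rring F e) (Fin n → Rring F e)) :
    (∀ c ∈ C, cyclicShift c ∈ C) ↔
      ∀ i, ∀ c ∈ compCode (σ i) C, cyclicShift c ∈ compCode (σ i) C := by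
  classical
  have hmk : ∀ i p, σ i (AdjoinRoot.mk _ p) = Polynomial.eval (α i) p := by
    intro i p
    rw [← AdjoinRoot.aeval_eq, ← Polynomial.aeval_algHom_apply, hσ]
    simp [Polynomial.aeval_def, Polynomial.eval₂_eq_eval_map]
  have hmonic : ((X : Polynomial F) ^ e - 1).Monic := by
    have := Polynomial.monic_X_pow_sub_C (1 : F) (by omega : e ≠ 0)
    simpa using this
  have hdeg : ((X : Polynomial F) ^ e - 1).degree = e := by
    have := Polynomial.degree_X_pow_sub_C (by omega : 0 < e) (1 : F)
    simpa using this
  -- injectivity of the joint component map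
  have hinj : ∀ r : Rring F e, (∀ i, σ i r = 0) → r = 0 := by
    intro r hr
    obtain ⟨p, rfl⟩ := AdjoinRoot.mk_surjective r
    set p' := p %ₘ ((X : Polynomial F) ^ e - 1) with hp'
    have hmkeq : AdjoinRoot.mk _ p' = AdjoinRoot.mk ((X : Polynomial F) ^ e - 1) p := by
      conv_rhs => rw [← Polynomial.modByMonic_add_div p ((X : Polynomial F) ^ e - 1)]
      simp [hp']
    have hz : p' = 0 := by
      apply Polynomial.eq_zero_of_degree_lt_of_eval_finset_eq_zero (Finset.univ.image α)
      · rw [Finset.card_image_of_injective _ hα, Finset.card_univ, Fintype.card_fin]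
        calc p'.degree < ((X : Polynomial F) ^ e - 1).degree :=
              Polynomial.degree_modByMonic_lt p hmonic
          _ = e := hdeg
      · intro x hx
        obtain ⟨i, _, rfl⟩ := Finset.mem_image.mp hx
        rw [← hmk, hmkeq]
        exact hr i
    rw [← hmkeq, hz, map_zero]
  -- idempotent-like elements
  set ε : Fin e → Rring F e := fun i =>
    AdjoinRoot.mk _ (Lagrange.basis Finset.univ α i) with hε
  have hαinj : Set.InjOn α ↑(Finset.univ : Finset (Fin e)) := fun a _ b _ h => hα h
  have hεval : ∀ i j, σ j (ε i) = if i = j then 1 else 0 := by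
    intro i j
    rw [hε]; simp only
    rw [hmk]
    by_cases h : i = j
    · subst h; simp [Lagrange.eval_basis_self hαinj (Finset.mem_univ i)]
    · simp [h, Lagrange.eval_basis_of_ne h (Finset.mem_univ j)]
  constructor
  · intro hC i c hc
    obtain ⟨d, hd, rfl⟩ := hc
    refine ⟨cyclicShift d, hC d hd, ?_⟩
    funext j
    simp [cyclicShift, LinearMap.compLeft]
  · intro h c hc
    have hcomp : ∀ i, cyclicShift (fun j => σ i (c j)) ∈ compCode (σ i) C := by
      intro i
      apply h i
      exact ⟨c, hc, by funext j; simp [LinearMap.compLeft]⟩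
    choose d hd hde using hcomp
    have hsum : (∑ i, ε i • d i) ∈ C := by
      apply Submodule.sum_mem
      intro i _
      exact Submodule.smul_mem _ _ (hd i)
    have heq : (∑ i, ε i • d i) = cyclicShift c := by
      funext k
      have key : ∀ j, σ j ((∑ i, ε i • d i) k - cyclicShift c k) = 0 := by
        intro j
        have hdj : (fun m => σ j (d j m)) = cyclicShift (fun m => σ j (c m)) := by
          have := hde j
          funext m
          have := congrFun this m
          simpa [LinearMap.compLeft] using this
        have hdjk : σ j (d j k) = σ j (c (k - 1)) := by
          have := congrFun hdj k
          simpa [cyclicShift] using this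
        rw [map_sub]
        have : σ j ((∑ i, ε i • d i) k) = ∑ i, σ j (ε i) * σ j (d i k) := by
          simp [Finset.sum_apply, map_sum, map_mul, smul_eq_mul]
        rw [this, Finset.sum_eq_single j]
        · rw [hεval]
          simp [hdjk, cyclicShift]
        · intro b _ hb
          rw [hεval]
          simp [hb]
        · intro hj; exact absurd (Finset.mem_univ j) hj
      exact sub_eq_zero.mp (hinj _ key)
    rw [← heq]; exact hsum
end

section
/- Let C be a cyclic code of length n over R whose component codes are C_i = ⟨g_i(x)⟩ ⊆ 𝔽_q[x]/⟨x^n − 1⟩, where each g_i ∈ 𝔽_q[x] is a monic polynomial with g_i(x)·h_i(x) = x^n − 1 for some h_i ∈ 𝔽_q[x]. Set g(x) = Σ_{i=1}^e μ_i·g_i(x) ∈ R[x] and h(x) = Σ_{i=1}^e μ_i·h_i(x) ∈ R[x] (coefficients of g_i, h_i viewed in R via the inclusion 𝔽_q ⊆ R). Then, under the identification of R^n with R[x]/⟨x^n − 1⟩, C is the ideal generated by g(x), and g(x)·h(x) = x^n − 1 in R[x]; moreover g is the unique polynomial of the form Σ_{i=1}^e μ_i·g_i'(x) with each g_i' a monic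 divisor of x^n − 1 in 𝔽_q[x] whose residue class generates C. -/
open Polynomial

namespace CycAux
noncomputable section
open Polynomial
variable {S T : Type} [CommRing S] [CommRing T] {n : ℕ}

lemma toPoly_add (c d : Fin n → S) : toPoly (c + d) = toPoly c + toPoly d := by
  unfold toPoly
  rw [← map_add, ← Finset.sum_add_distrib]
  congr 1
  refine Finset.sum_congr rfl fun j _ => ?_
  simp [add_mul]

lemma toPoly_zero : toPoly (0 : Fin n → S) = 0 := by
  unfold toPoly; simp

lemma toPoly_smul (r : S) (c : Fin n → S) :
    toPoly (r • c) = Ideal.Quotient.mk _ (C r) * toPoly c := by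
  unfold toPoly
  rw [← map_mul, Finset.mul_sum]
  congr 1
  refine Finset.sum_congr rfl fun j _ => ?_
  simp [mul_assoc, smul_eq_mul]

lemma toPoly_sum {ι : Type} (s : Finset ι) (v : ι → Fin n → S) :
    toPoly (∑ i ∈ s, v i) = ∑ i ∈ s, toPoly (v i) := by
  induction s using Finset.cons_induction with
  | empty => simpa using toPoly_zero
  | cons i s hi ih => rw [Finset.sum_cons, Finset.sum_cons, toPoly_add, ih]

lemma mk_X_pow_n [NeZero n] :
    Ideal.Quotient.mk (Ideal.span {(X : Polynomial S) ^ n - 1}) (X ^ n) = 1 := by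
  have h0 : Ideal.Quotient.mk (Ideal.span {(X : Polynomial S) ^ n - 1}) (X ^ n - 1) = 0 :=
    Ideal.Quotient.eq_zero_iff_mem.mpr (Ideal.subset_span rfl)
  have := sub_eq_zero.mp (by simpa [map_sub] using h0)
  simpa using this

lemma mk_X_pow_mod [NeZero n] (m : ℕ) :
    Ideal.Quotient.mk (Ideal.span {(X : Polynomial S) ^ n - 1}) (X ^ m)
      = Ideal.Quotient.mk _ (X ^ (m % n)) := by
  conv_lhs => rw [← Nat.div_add_mod m n]
  rw [pow_add, pow_mul, map_mul, map_pow, mk_X_pow_n, one_pow, one_mul]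

lemma toPoly_shift [NeZero n] (c : Fin n → S) :
    toPoly (cyclicShift c) = Ideal.Quotient.mk _ X * toPoly c := by
  unfold toPoly cyclicShift
  rw [← map_mul, Finset.mul_sum, map_sum, map_sum]
  rw [Fintype.sum_equiv (Equiv.subRight (1 : Fin n))
      (fun j => Ideal.Quotient.mk _ (C (c (j - 1)) * X ^ (j : ℕ)))
      (fun k => Ideal.Quotient.mk (Ideal.span {(X : Polynomial S) ^ n - 1})
        (C (c k) * X ^ ((k + 1 : Fin n) : ℕ)))
      (fun x => by simp [Equiv.subRight, sub_add_cancel])]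
  refine Finset.sum_congr rfl fun k _ => ?_
  have h1 : ((k + 1 : Fin n) : ℕ) = ((k : ℕ) + 1) % n := by
    rw [Fin.val_add, Fin.val_one']
    conv_lhs => rw [Nat.add_mod, Nat.mod_mod_of_dvd _ dvd_rfl, ← Nat.add_mod]
  have h2 : Ideal.Quotient.mk (Ideal.span {(X : Polynomial S) ^ n - 1})
      (X ^ ((k + 1 : Fin n) : ℕ)) = Ideal.Quotient.mk _ (X ^ ((k : ℕ) + 1)) := by
    rw [h1, ← mk_X_pow_mod]
  rw [map_mul, h2, map_mul, map_mul, map_pow, map_pow, pow_succ]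
  ring

def qmap (φ : S →+* T) :
    (Polynomial S ⧸ Ideal.span {(X : Polynomial S) ^ n - 1}) →+*
    (Polynomial T ⧸ Ideal.span {(X : Polynomial T) ^ n - 1}) :=
  Ideal.quotientMap _ (mapRingHom φ) (by
    rw [Ideal.span_le]
    intro x hx
    rw [Set.mem_singleton_iff] at hx
    subst hx
    rw [SetLike.mem_coe, Ideal.mem_comap]
    have hh : (mapRingHom φ) ((X : Polynomial S) ^ n - 1) = (X : Polynomial T) ^ n - 1 := by
      simp
    rw [hh]
    exact Ideal.subset_span rfl)

lemma qmap_mk (φ : S →+* T) (p : Polynomial S) :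
    qmap (n := n) φ (Ideal.Quotient.mk (Ideal.span {(X : Polynomial S) ^ n - 1}) p) =
      Ideal.Quotient.mk (Ideal.span {(X : Polynomial T) ^ n - 1}) (p.map φ) :=
  Ideal.quotientMap_mk

lemma toPoly_comp (φ : S →+* T) (c : Fin n → S) :
    toPoly (fun j => φ (c j)) = qmap φ (toPoly c) := by
  unfold toPoly
  rw [qmap_mk]
  congr 1
  rw [Polynomial.map_sum]
  refine Finset.sum_congr rfl fun j _ => ?_
  simp

lemma sigma_inj {F : Type} [Field F] {e : ℕ} (he : 2 ≤ e) (α : Fin e → F)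
    (hα : Function.Injective α)
    (σ : Fin e → (Rring F e →ₐ[F] F))
    (hσ : ∀ i, σ i (AdjoinRoot.root ((X : Polynomial F) ^ e - 1)) = α i)
    {r : Rring F e} (h0 : ∀ i, σ i r = 0) : r = 0 := by
  obtain ⟨p, rfl⟩ := AdjoinRoot.mk_surjective r
  have hfm : ((X : Polynomial F) ^ e - 1).Monic := by
    simpa using monic_X_pow_sub_C (1 : F) (by omega : e ≠ 0)
  set q := p %ₘ ((X : Polynomial F) ^ e - 1) with hqdef
  have hmk : AdjoinRoot.mk ((X : Polynomial F) ^ e - 1) q = AdjoinRoot.mk _ p := by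
    rw [AdjoinRoot.mk_eq_mk, hqdef, modByMonic_eq_sub_mul_div p _]
    rw [sub_sub_cancel_left]
    exact (dvd_neg).mpr ⟨_, rfl⟩
  have heval : ∀ i, q.eval (α i) = 0 := by
    intro i
    have h1 : σ i (AdjoinRoot.mk _ q) = aeval (α i) q := by
      rw [← AdjoinRoot.aeval_eq, ← Polynomial.aeval_algHom_apply, hσ]
    rw [hmk, h0 i] at h1
    simpa using h1.symm
  have hq0 : q = 0 := by
    by_contra hne
    refine hne (Polynomial.eq_zero_of_natDegree_lt_card_of_eval_eq_zero q hα heval ?_)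
    have hdeg := degree_modByMonic_lt p hfm
    have h3 := Polynomial.natDegree_lt_natDegree hne hdeg
    have h4 : ((X : Polynomial F) ^ e - 1).natDegree = e := by
      simpa using natDegree_X_pow_sub_C (n := e) (r := (1 : F))
    rw [h4] at h3
    simpa using h3
  rw [← hmk, hq0, map_zero]

end
end CycAux

open CycAux
set_option maxHeartbeats 2000000

/-- Let `C` be a cyclic code of length `n` over `R = 𝔽_q[u]/⟨u^e − 1⟩`
whose component codes are `C_i = ⟨g_i(x)⟩` with `g_i` monic and `g_i·h_i = x^n − 1`.
Then, with `g(x) = ∑ μ_i g_i(x)` and `h(x) = ∑ μ_i h_i(x)`, the code `C` (viewed in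
`R[x]/⟨x^n − 1⟩`) is the ideal generated by `g(x)`, `g(x)·h(x) = x^n − 1` in `R[x]`,
and `g` is the unique polynomial of the form `∑ μ_i g_i'(x)` with each `g_i'` a monic
divisor of `x^n − 1` whose residue class generates `C`. -/
theorem cyclic_generator_polynomial
    {F : Type} [Field F] [Fintype F] (e n : ℕ) [NeZero n] (he : 2 ≤ e)
    (hdvd : e ∣ Fintype.card F - 1)
    (α : Fin e → F) (hα : Function.Injective α) (hroot : ∀ i, α i ^ e = 1)
    (σ : Fin e → (Rring F e →ₐ[F] F))
    (hσ : ∀ i, σ i (AdjoinRoot.root ((X : Polynomial F) ^ e - 1)) = α i)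
    (μ : Fin e → Rring F e)
    (hμ : ∀ i j, σ j (μ i) = if i = j then 1 else 0)
    (C : Submodule (Rring F e) (Fin n → Rring F e))
    (hcyc : ∀ c ∈ C, cyclicShift c ∈ C)
    (g h : Fin e → Polynomial F)
    (hmonic : ∀ i, (g i).Monic)
    (hgh : ∀ i, g i * h i = (X : Polynomial F) ^ n - 1)
    (hcomp : ∀ i, toPoly '' (compCode (σ i) C : Set (Fin n → F)) =
      (Ideal.span {Ideal.Quotient.mk (Ideal.span {(X : Polynomial F) ^ n - 1}) (g i)} :
        Set (Polynomial F ⧸ Ideal.span {(X : Polynomial F) ^ n - 1}))) :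
    (toPoly '' (C : Set (Fin n → Rring F e)) =
      (Ideal.span {Ideal.Quotient.mk
          (Ideal.span {(X : Polynomial (Rring F e)) ^ n - 1})
          (∑ i, Polynomial.C (μ i) * (g i).map (algebraMap F (Rring F e)))} :
        Set (Polynomial (Rring F e) ⧸
          Ideal.span {(X : Polynomial (Rring F e)) ^ n - 1}))) ∧
    ((∑ i, Polynomial.C (μ i) * (g i).map (algebraMap F (Rring F e))) *
        (∑ i, Polynomial.C (μ i) * (h i).map (algebraMap F (Rring F e))) =
      (X : Polynomial (Rring F e)) ^ n - 1) ∧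
    (∀ g' : Fin e → Polynomial F, (∀ i, (g' i).Monic) →
      (∀ i, g' i ∣ (X : Polynomial F) ^ n - 1) →
      toPoly '' (C : Set (Fin n → Rring F e)) =
        (Ideal.span {Ideal.Quotient.mk
            (Ideal.span {(X : Polynomial (Rring F e)) ^ n - 1})
            (∑ i, Polynomial.C (μ i) * (g' i).map (algebraMap F (Rring F e)))} :
          Set (Polynomial (Rring F e) ⧸
            Ideal.span {(X : Polynomial (Rring F e)) ^ n - 1})) →
      (∑ i, Polynomial.C (μ i) * (g' i).map (algebraMap F (Rring F e))) =
        (∑ i, Polynomial.C (μ i) * (g i).map (algebraMap F (Rring F e)))) := by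
  classical
  -- injectivity of the joint evaluation map
  have hinj : ∀ r : (Rring F e), (∀ i, σ i r = 0) → r = 0 := fun r h0 => sigma_inj he α hα σ hσ h0
  have hsum : (∑ i, μ i) = 1 := by
    refine sub_eq_zero.mp (hinj _ fun j => ?_)
    rw [map_sub, map_sum, map_one]
    simp [hμ]
  have hmul2 : ∀ i k, μ i * μ k = if i = k then μ i else 0 := by
    intro i k
    refine sub_eq_zero.mp (hinj _ fun j => ?_)
    rw [map_sub, map_mul, hμ, hμ, apply_ite (σ j), map_zero, hμ]
    split_ifs <;> simp_all
  have hfix : ∀ (i : Fin e) (r : (Rring F e)), μ i * (algebraMap F (Rring F e)) (σ i r) = μ i * r := by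
    intro i r
    refine sub_eq_zero.mp (hinj _ fun j => ?_)
    simp only [map_sub, map_mul, hμ, AlgHom.commutes, Algebra.algebraMap_self_apply]
    split_ifs with hij
    · subst hij; ring
    · ring
  have hfull : ∀ r : (Rring F e), ∑ i, μ i * (algebraMap F (Rring F e)) (σ i r) = r := by
    intro r
    calc ∑ i, μ i * (algebraMap F (Rring F e)) (σ i r) = ∑ i, μ i * r := Finset.sum_congr rfl fun i _ => hfix i r
      _ = (∑ i, μ i) * r := (Finset.sum_mul _ _ _).symm
      _ = r := by rw [hsum, one_mul]
  -- mapping the combined polynomial coordinatewise by σ j recovers the j-th component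
  have hmapσ : ∀ (p : Fin e → Polynomial F) (j : Fin e),
      (∑ i, Polynomial.C (μ i) * (p i).map (algebraMap F (Rring F e))).map (σ j).toRingHom = p j := by
    intro p j
    rw [Polynomial.map_sum]
    have h1 : ∀ i, (Polynomial.C (μ i) * (p i).map (algebraMap F (Rring F e))).map (σ j).toRingHom
        = if i = j then p i else 0 := by
      intro i
      rw [Polynomial.map_mul, map_C, Polynomial.map_map]
      have h2 : (σ j).toRingHom.comp (algebraMap F (Rring F e)) = RingHom.id F := by
        ext x; simpa using (σ j).commutes x
      rw [h2, Polynomial.map_id]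
      have h3 : (σ j).toRingHom (μ i) = if i = j then 1 else 0 := hμ i j
      rw [h3, apply_ite Polynomial.C, map_one, map_zero]
      split_ifs <;> simp
    simp_rw [h1]
    simp
  have horth : ∀ (p : Fin e → Polynomial F) (i : Fin e),
      Polynomial.C (μ i) * (∑ k, Polynomial.C (μ k) * (p k).map (algebraMap F (Rring F e)))
        = Polynomial.C (μ i) * (p i).map (algebraMap F (Rring F e)) := by
    intro p i
    rw [Finset.mul_sum]
    have h1 : ∀ k, Polynomial.C (μ i) * (Polynomial.C (μ k) * (p k).map (algebraMap F (Rring F e)))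
        = if i = k then Polynomial.C (μ i) * (p i).map (algebraMap F (Rring F e)) else 0 := by
      intro k
      rw [← mul_assoc, ← map_mul, hmul2]
      split_ifs with hik
      · subst hik; rfl
      · simp
    simp_rw [h1]
    simp
  -- Part 2
  have part2 : (∑ i, Polynomial.C (μ i) * (g i).map (algebraMap F (Rring F e))) *
      (∑ i, Polynomial.C (μ i) * (h i).map (algebraMap F (Rring F e))) = (X : Polynomial (Rring F e)) ^ n - 1 := by
    rw [Finset.sum_mul_sum]
    have hterm : ∀ i k, (Polynomial.C (μ i) * (g i).map (algebraMap F (Rring F e))) * (Polynomial.C (μ k) * (h k).map (algebraMap F (Rring F e)))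
        = if i = k then Polynomial.C (μ i) * ((X : Polynomial (Rring F e)) ^ n - 1) else 0 := by
      intro i k
      have h1 : (Polynomial.C (μ i) * (g i).map (algebraMap F (Rring F e))) * (Polynomial.C (μ k) * (h k).map (algebraMap F (Rring F e)))
          = Polynomial.C (μ i * μ k) * ((g i).map (algebraMap F (Rring F e)) * (h k).map (algebraMap F (Rring F e))) := by
        rw [map_mul]; ring
      rw [h1, hmul2]
      split_ifs with hik
      · subst hik
        rw [← Polynomial.map_mul, hgh i]
        congr 1
        simp
      · simp
    simp_rw [hterm]
    simp only [Finset.sum_ite_eq, Finset.mem_univ, if_true]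
    rw [← Finset.sum_mul, ← map_sum, hsum, map_one, one_mul]
  -- decomposition of toPoly
  have hdecompA : ∀ c : Fin n → (Rring F e),
      toPoly c = ∑ i, (Ideal.Quotient.mk (Ideal.span {(X : Polynomial (Rring F e)) ^ n - 1})) (Polynomial.C (μ i)) * qmap (algebraMap F (Rring F e)) (toPoly (fun j => σ i (c j))) := by
    intro c
    have h1 : c = ∑ i, (μ i • (fun j => (algebraMap F (Rring F e)) (σ i (c j)))) := by
      funext j
      rw [Finset.sum_apply]
      simp only [Pi.smul_apply, smul_eq_mul]
      exact (hfull (c j)).symm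
    conv_lhs => rw [h1]
    rw [toPoly_sum]
    exact Finset.sum_congr rfl fun i _ => by rw [toPoly_smul, toPoly_comp]
  -- component membership
  have hcompmem : ∀ (i : Fin e) (a : Fin n → F), a ∈ compCode (σ i) C →
      (fun j => μ i * (algebraMap F (Rring F e)) (a j)) ∈ C := by
    intro i a ha
    obtain ⟨c, hc, rfl⟩ := Submodule.mem_map.mp ha
    have h1 : (fun j => μ i * (algebraMap F (Rring F e)) ((((σ i).toLinearMap.compLeft (Fin n)) c) j)) = μ i • c := by
      funext j
      show μ i * (algebraMap F (Rring F e)) (σ i (c j)) = μ i * c j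
      exact hfix i (c j)
    rw [h1]
    exact C.smul_mem _ ((Submodule.restrictScalars_mem _ _ _).mp hc)
  -- toPoly '' C is stable under multiplication by arbitrary quotient elements
  have hclosed : ∀ (P : Polynomial (Rring F e)) (c : Fin n → (Rring F e)), c ∈ C →
      (Ideal.Quotient.mk (Ideal.span {(X : Polynomial (Rring F e)) ^ n - 1})) P * toPoly c ∈ toPoly '' (C : Set (Fin n → (Rring F e))) := by
    intro P
    induction P using Polynomial.induction_on with
    | C a =>
      intro c hc
      rw [← toPoly_smul]
      exact Set.mem_image_of_mem _ (C.smul_mem a hc)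
    | add p q hp hq =>
      intro c hc
      obtain ⟨d1, hd1, he1⟩ := hp c hc
      obtain ⟨d2, hd2, he2⟩ := hq c hc
      rw [map_add, add_mul, ← he1, ← he2, ← toPoly_add]
      exact Set.mem_image_of_mem _ (C.add_mem hd1 hd2)
    | monomial k a ih =>
      intro c hc
      have h1 : (Ideal.Quotient.mk (Ideal.span {(X : Polynomial (Rring F e)) ^ n - 1})) (Polynomial.C a * X ^ (k + 1)) * toPoly c
          = (Ideal.Quotient.mk (Ideal.span {(X : Polynomial (Rring F e)) ^ n - 1})) X * ((Ideal.Quotient.mk (Ideal.span {(X : Polynomial (Rring F e)) ^ n - 1})) (Polynomial.C a * X ^ k) * toPoly c) := by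
        rw [map_mul, map_mul, map_pow, map_pow, pow_succ]
        ring
      rw [h1]
      obtain ⟨d, hd, hde⟩ := ih c hc
      rw [← hde, ← toPoly_shift]
      exact Set.mem_image_of_mem _ (hcyc d hd)
  -- the generator lies in the image
  have hGmem : ∀ (gg : Fin e → Polynomial F),
      (∀ i, toPoly '' (compCode (σ i) C : Set (Fin n → F)) =
        (Ideal.span {(Ideal.Quotient.mk (Ideal.span {(X : Polynomial F) ^ n - 1})) (gg i)} : Set (Polynomial F ⧸ Ideal.span {(X : Polynomial F) ^ n - 1}))) →
      (Ideal.Quotient.mk (Ideal.span {(X : Polynomial (Rring F e)) ^ n - 1})) (∑ i, Polynomial.C (μ i) * (gg i).map (algebraMap F (Rring F e))) ∈ toPoly '' (C : Set (Fin n → (Rring F e))) := by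
    intro gg hcompg
    have hgi : ∀ i, ∃ a ∈ compCode (σ i) C, toPoly a = (Ideal.Quotient.mk (Ideal.span {(X : Polynomial F) ^ n - 1})) (gg i) := by
      intro i
      have h1 : (Ideal.Quotient.mk (Ideal.span {(X : Polynomial F) ^ n - 1})) (gg i) ∈ (Ideal.span {(Ideal.Quotient.mk (Ideal.span {(X : Polynomial F) ^ n - 1})) (gg i)} :
          Set (Polynomial F ⧸ Ideal.span {(X : Polynomial F) ^ n - 1})) :=
        Ideal.subset_span rfl
      rw [← hcompg i] at h1
      exact h1
    choose a ha hta using hgi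
    have hdC : (∑ i, (fun j => μ i * (algebraMap F (Rring F e)) (a i j))) ∈ C :=
      Submodule.sum_mem C fun i _ => hcompmem i (a i) (ha i)
    have hdp : toPoly (∑ i, (fun j => μ i * (algebraMap F (Rring F e)) (a i j)))
        = (Ideal.Quotient.mk (Ideal.span {(X : Polynomial (Rring F e)) ^ n - 1})) (∑ i, Polynomial.C (μ i) * (gg i).map (algebraMap F (Rring F e))) := by
      rw [toPoly_sum, map_sum]
      refine Finset.sum_congr rfl fun i _ => ?_
      have h1 : (fun j => μ i * (algebraMap F (Rring F e)) (a i j)) = μ i • (fun j => (algebraMap F (Rring F e)) (a i j)) := by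
        funext j; simp [smul_eq_mul]
      rw [h1, toPoly_smul, toPoly_comp, hta i, qmap_mk, map_mul]
    rw [← hdp]
    exact Set.mem_image_of_mem _ hdC
  -- Part 1
  have part1 : ∀ (gg : Fin e → Polynomial F),
      (∀ i, toPoly '' (compCode (σ i) C : Set (Fin n → F)) =
        (Ideal.span {(Ideal.Quotient.mk (Ideal.span {(X : Polynomial F) ^ n - 1})) (gg i)} : Set (Polynomial F ⧸ Ideal.span {(X : Polynomial F) ^ n - 1}))) →
      toPoly '' (C : Set (Fin n → (Rring F e))) =
        (Ideal.span {(Ideal.Quotient.mk (Ideal.span {(X : Polynomial (Rring F e)) ^ n - 1})) (∑ i, Polynomial.C (μ i) * (gg i).map (algebraMap F (Rring F e)))} :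
          Set (Polynomial (Rring F e) ⧸ Ideal.span {(X : Polynomial (Rring F e)) ^ n - 1})) := by
    intro gg hcompg
    apply Set.Subset.antisymm
    · rintro z ⟨c, hc, rfl⟩
      rw [SetLike.mem_coe, hdecompA c]
      refine Ideal.sum_mem _ fun i _ => ?_
      have hci : toPoly (fun j => σ i (c j)) ∈ Ideal.span {(Ideal.Quotient.mk (Ideal.span {(X : Polynomial F) ^ n - 1})) (gg i)} := by
        rw [← SetLike.mem_coe, ← hcompg i]
        refine Set.mem_image_of_mem _ ?_
        exact Submodule.mem_map.mpr ⟨c, (Submodule.restrictScalars_mem _ _ _).mpr hc, rfl⟩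
      obtain ⟨s, hs⟩ := Ideal.mem_span_singleton'.mp hci
      obtain ⟨t, rfl⟩ := Ideal.Quotient.mk_surjective s
      refine Ideal.mem_span_singleton'.mpr ⟨(Ideal.Quotient.mk (Ideal.span {(X : Polynomial (Rring F e)) ^ n - 1})) (t.map (algebraMap F (Rring F e)) * Polynomial.C (μ i)), ?_⟩
      have hpoly : (t.map (algebraMap F (Rring F e)) * Polynomial.C (μ i)) * (∑ k, Polynomial.C (μ k) * (gg k).map (algebraMap F (Rring F e)))
          = Polynomial.C (μ i) * (t.map (algebraMap F (Rring F e)) * (gg i).map (algebraMap F (Rring F e))) := by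
        rw [mul_assoc, horth gg i]
        ring
      calc (Ideal.Quotient.mk (Ideal.span {(X : Polynomial (Rring F e)) ^ n - 1}))
              (t.map (algebraMap F (Rring F e)) * Polynomial.C (μ i)) *
            (Ideal.Quotient.mk (Ideal.span {(X : Polynomial (Rring F e)) ^ n - 1}))
              (∑ k, Polynomial.C (μ k) * (gg k).map (algebraMap F (Rring F e)))
          = (Ideal.Quotient.mk (Ideal.span {(X : Polynomial (Rring F e)) ^ n - 1}))
              ((t.map (algebraMap F (Rring F e)) * Polynomial.C (μ i)) *
                (∑ k, Polynomial.C (μ k) * (gg k).map (algebraMap F (Rring F e)))) :=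
            (map_mul _ _ _).symm
        _ = (Ideal.Quotient.mk (Ideal.span {(X : Polynomial (Rring F e)) ^ n - 1}))
              (Polynomial.C (μ i) *
                (t.map (algebraMap F (Rring F e)) * (gg i).map (algebraMap F (Rring F e)))) := by
            rw [hpoly]
        _ = (Ideal.Quotient.mk (Ideal.span {(X : Polynomial (Rring F e)) ^ n - 1}))
              (Polynomial.C (μ i)) *
            ((Ideal.Quotient.mk (Ideal.span {(X : Polynomial (Rring F e)) ^ n - 1}))
              (t.map (algebraMap F (Rring F e))) *
             (Ideal.Quotient.mk (Ideal.span {(X : Polynomial (Rring F e)) ^ n - 1}))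
              ((gg i).map (algebraMap F (Rring F e)))) := by
            rw [map_mul, map_mul]
        _ = (Ideal.Quotient.mk (Ideal.span {(X : Polynomial (Rring F e)) ^ n - 1}))
              (Polynomial.C (μ i)) *
            qmap (algebraMap F (Rring F e))
              ((Ideal.Quotient.mk (Ideal.span {(X : Polynomial F) ^ n - 1})) t *
               (Ideal.Quotient.mk (Ideal.span {(X : Polynomial F) ^ n - 1})) (gg i)) := by
            rw [map_mul, qmap_mk, qmap_mk]
        _ = (Ideal.Quotient.mk (Ideal.span {(X : Polynomial (Rring F e)) ^ n - 1}))
              (Polynomial.C (μ i)) *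
            qmap (algebraMap F (Rring F e)) (toPoly fun j => σ i (c j)) := by
            rw [hs]
    · intro z hz
      rw [SetLike.mem_coe] at hz
      obtain ⟨s, hs⟩ := Ideal.mem_span_singleton'.mp hz
      obtain ⟨P, rfl⟩ := Ideal.Quotient.mk_surjective s
      obtain ⟨d, hd, hde⟩ := hGmem gg hcompg
      rw [← hs, ← hde]
      exact hclosed P d hd
  have himg := part1 g hcomp
  refine ⟨himg, part2, ?_⟩
  -- Part 3: uniqueness
  intro g' hmon' hdvd' heq
  have hset : (Ideal.span {(Ideal.Quotient.mk (Ideal.span {(X : Polynomial (Rring F e)) ^ n - 1})) (∑ i, Polynomial.C (μ i) * (g' i).map (algebraMap F (Rring F e)))} :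
      Set (Polynomial (Rring F e) ⧸ Ideal.span {(X : Polynomial (Rring F e)) ^ n - 1})) =
      (Ideal.span {(Ideal.Quotient.mk (Ideal.span {(X : Polynomial (Rring F e)) ^ n - 1})) (∑ i, Polynomial.C (μ i) * (g i).map (algebraMap F (Rring F e)))} :
      Set (Polynomial (Rring F e) ⧸ Ideal.span {(X : Polynomial (Rring F e)) ^ n - 1})) := by
    rw [← heq, himg]
  have hmem1 : (Ideal.Quotient.mk (Ideal.span {(X : Polynomial (Rring F e)) ^ n - 1})) (∑ i, Polynomial.C (μ i) * (g' i).map (algebraMap F (Rring F e))) ∈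
      Ideal.span {(Ideal.Quotient.mk (Ideal.span {(X : Polynomial (Rring F e)) ^ n - 1})) (∑ i, Polynomial.C (μ i) * (g i).map (algebraMap F (Rring F e)))} := by
    rw [← SetLike.mem_coe, ← hset]
    exact Ideal.subset_span rfl
  have hmem2 : (Ideal.Quotient.mk (Ideal.span {(X : Polynomial (Rring F e)) ^ n - 1})) (∑ i, Polynomial.C (μ i) * (g i).map (algebraMap F (Rring F e))) ∈
      Ideal.span {(Ideal.Quotient.mk (Ideal.span {(X : Polynomial (Rring F e)) ^ n - 1})) (∑ i, Polynomial.C (μ i) * (g' i).map (algebraMap F (Rring F e)))} := by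
    rw [← SetLike.mem_coe, hset]
    exact Ideal.subset_span rfl
  have hdvdmap : ∀ (u v : Fin e → Polynomial F),
      (Ideal.Quotient.mk (Ideal.span {(X : Polynomial (Rring F e)) ^ n - 1})) (∑ i, Polynomial.C (μ i) * (u i).map (algebraMap F (Rring F e))) ∈
        Ideal.span {(Ideal.Quotient.mk (Ideal.span {(X : Polynomial (Rring F e)) ^ n - 1})) (∑ i, Polynomial.C (μ i) * (v i).map (algebraMap F (Rring F e)))} →
      ∀ j, ∃ P : Polynomial F,
        ((X : Polynomial F) ^ n - 1) ∣ P * v j - u j := by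
    intro u v hmem j
    obtain ⟨s, hs⟩ := Ideal.mem_span_singleton'.mp hmem
    obtain ⟨P, rfl⟩ := Ideal.Quotient.mk_surjective s
    have h0 : (Ideal.Quotient.mk (Ideal.span {(X : Polynomial (Rring F e)) ^ n - 1})) (P * (∑ i, Polynomial.C (μ i) * (v i).map (algebraMap F (Rring F e)))
        - (∑ i, Polynomial.C (μ i) * (u i).map (algebraMap F (Rring F e)))) = 0 := by
      rw [map_sub, map_mul, hs, sub_self]
    have h1 : ((X : Polynomial (Rring F e)) ^ n - 1) ∣
        P * (∑ i, Polynomial.C (μ i) * (v i).map (algebraMap F (Rring F e)))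
          - (∑ i, Polynomial.C (μ i) * (u i).map (algebraMap F (Rring F e))) :=
      Ideal.mem_span_singleton.mp (Ideal.Quotient.eq_zero_iff_mem.mp h0)
    refine ⟨P.map (σ j).toRingHom, ?_⟩
    have h2 := map_dvd (mapRingHom (σ j).toRingHom) h1
    simp only [coe_mapRingHom, Polynomial.map_sub, Polynomial.map_mul, Polynomial.map_pow,
      Polynomial.map_one, map_X] at h2
    rwa [hmapσ u j, hmapσ v j] at h2
  have hgg' : ∀ j, g' j = g j := by
    intro j
    have hgdvd : g j ∣ (X : Polynomial F) ^ n - 1 := ⟨h j, (hgh j).symm⟩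
    obtain ⟨P, hP⟩ := hdvdmap g' g hmem1 j
    obtain ⟨Q, hQ⟩ := hdvdmap g g' hmem2 j
    have d1 : g j ∣ g' j := by
      have hd := dvd_sub (dvd_mul_left (g j) P) (hgdvd.trans hP)
      simpa using hd
    have d2 : g' j ∣ g j := by
      have hd := dvd_sub (dvd_mul_left (g' j) Q) ((hdvd' j).trans hQ)
      simpa using hd
    exact Polynomial.eq_of_monic_of_associated (hmon' j) (hmonic j) (associated_of_dvd_dvd d2 d1)
  refine Finset.sum_congr rfl fun j _ => ?_
  rw [hgg' j]
end

section
/- For every n ≥ 1, every ideal of the ring R[x]/⟨x^n − 1⟩ is principal; that is, every cyclic code of length n over R is generated by a single element. -/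
open Polynomial

/-- A finite product of (commutative) principal ideal rings is a principal ideal ring. -/
theorem pi_isPrincipalIdealRing {ι : Type} [Fintype ι] {S : ι → Type}
    [∀ i, CommRing (S i)] [∀ i, IsPrincipalIdealRing (S i)] :
    IsPrincipalIdealRing (∀ i, S i) := by
  classical
  constructor
  intro I
  have hsurj : ∀ i, Function.Surjective (Pi.evalRingHom S i) :=
    fun i => Function.surjective_eval i
  have hx : ∀ i, ∃ x, x ∈ I ∧ Pi.evalRingHom S i x =
      Submodule.IsPrincipal.generator (I.map (Pi.evalRingHom S i)) := by
    intro i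
    have := Submodule.IsPrincipal.generator_mem (I.map (Pi.evalRingHom S i))
    rwa [Ideal.mem_map_iff_of_surjective _ (hsurj i)] at this
  choose x hxI hxg using hx
  set a : ∀ i, S i :=
    fun i => Submodule.IsPrincipal.generator (I.map (Pi.evalRingHom S i)) with ha
  have haI : a ∈ I := by
    have hrepr : a = ∑ i, Pi.single i (1 : S i) * x i := by
      funext j
      rw [Finset.sum_apply]
      rw [Finset.sum_eq_single j]
      · have := hxg j
        simp only [Pi.evalRingHom_apply] at this
        simp [ha, ← this]
      · intro i _ hij
        simp [Pi.single_eq_of_ne (Ne.symm hij)]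
      · intro h; exact absurd (Finset.mem_univ j) h
    rw [hrepr]
    exact Ideal.sum_mem I fun i _ => I.mul_mem_left _ (hxI i)
  refine ⟨a, le_antisymm ?_ ?_⟩
  · intro y hy
    have hyj : ∀ j, a j ∣ y j := by
      intro j
      have hmem : y j ∈ I.map (Pi.evalRingHom S j) := Ideal.mem_map_of_mem _ hy
      rwa [← Ideal.span_singleton_generator (I.map (Pi.evalRingHom S j)),
        Ideal.mem_span_singleton] at hmem
    choose c hc using hyj
    show y ∈ Ideal.span {a}
    rw [Ideal.mem_span_singleton]
    exact ⟨c, funext fun j => hc j⟩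
  · show Ideal.span {a} ≤ I
    rw [Ideal.span_le, Set.singleton_subset_iff]
    exact haI

/-- If `π : (AdjoinRoot f)[X] →+* B` is surjective and kills `C (root f − a)`, then
the composite `F[X] → (AdjoinRoot f)[X] → B` is surjective. -/
theorem surj_of_kills {F : Type} [Field F] {f : Polynomial F} {B : Type} [CommRing B]
    (π : Polynomial (AdjoinRoot f) →+* B) (hπ : Function.Surjective π) (a : F)
    (hkill : π (Polynomial.C (AdjoinRoot.root f - algebraMap F (AdjoinRoot f) a)) = 0) :
    Function.Surjective
      (π.comp (Polynomial.mapRingHom (algebraMap F (AdjoinRoot f)))) := by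
  set θ := π.comp (Polynomial.mapRingHom (algebraMap F (AdjoinRoot f))) with hθ
  have hroot : π (Polynomial.C (AdjoinRoot.root f)) =
      π (Polynomial.C (algebraMap F (AdjoinRoot f) a)) := by
    have := hkill
    rw [map_sub, map_sub, sub_eq_zero] at this
    exact this
  have hconst : ∀ r : AdjoinRoot f, π (Polynomial.C r) ∈ Set.range θ := by
    intro r
    induction r using AdjoinRoot.induction_on with
    | ih p =>
      set ψ1 : Polynomial F →+* B :=
        π.comp ((Polynomial.C : AdjoinRoot f →+* Polynomial (AdjoinRoot f)).comp
          (AdjoinRoot.mk f)) with hψ1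
      set ψ2 : Polynomial F →+* B :=
        θ.comp ((Polynomial.C : F →+* Polynomial F).comp (Polynomial.evalRingHom a)) with hψ2
      have hext : ψ1 = ψ2 := by
        apply Polynomial.ringHom_ext
        · intro b
          simp [hψ1, hψ2, hθ, AdjoinRoot.algebraMap_eq]
        · simp [hψ1, hψ2, hθ, AdjoinRoot.algebraMap_eq, hroot]
      refine ⟨Polynomial.C (Polynomial.eval a p), ?_⟩
      have := congrArg (fun g => g p) hext
      simpa [hψ1, hψ2] using this.symm
  intro t
  obtain ⟨g, rfl⟩ := hπ t
  induction g using Polynomial.induction_on with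
  | C r => exact hconst r
  | add p q hp hq =>
    obtain ⟨u, hu⟩ := hp
    obtain ⟨v, hv⟩ := hq
    exact ⟨u + v, by rw [map_add, hu, hv, map_add]⟩
  | monomial k r hk =>
    obtain ⟨u, hu⟩ := hk
    refine ⟨u * X, ?_⟩
    have hX : θ X = π X := by simp [hθ]
    rw [map_mul, hu, hX, ← map_mul, pow_succ, ← mul_assoc]

set_option maxHeartbeats 1000000 in
theorem rring_quot_pir {F : Type} [Field F] [Fintype F] (e : ℕ) (he : 2 ≤ e)
    (hdvd : e ∣ Fintype.card F - 1) (n : ℕ) :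
    IsPrincipalIdealRing (Polynomial (Rring F e) ⧸
      Ideal.span {(X : Polynomial (Rring F e)) ^ n - 1}) := by
  classical
  have he0 : 0 < e := lt_of_lt_of_le two_pos he
  obtain ⟨g, hg⟩ := IsCyclic.exists_ofOrder_eq_natCard (α := Fˣ)
  have hcard : Nat.card Fˣ = Fintype.card F - 1 := by
    rw [Nat.card_eq_fintype_card, Fintype.card_units]
  have hprimg : IsPrimitiveRoot ((g : F)) (Fintype.card F - 1) := by
    have := IsPrimitiveRoot.orderOf (g : F)
    rwa [orderOf_units, hg, hcard] at this
  obtain ⟨k, hk⟩ := hdvd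
  have hpos : 0 < Fintype.card F - 1 := by
    have : 1 < Fintype.card F := Fintype.one_lt_card
    omega
  have hζ : IsPrimitiveRoot ((g : F) ^ k) e := hprimg.pow hpos (by rw [hk, mul_comm])
  set f : Polynomial F := (X : Polynomial F) ^ e - 1 with hf
  set R := Rring F e with hR
  set J : Ideal (Polynomial R) := Ideal.span {(X : Polynomial R) ^ n - 1} with hJ
  set mkP : Polynomial R →+* Polynomial R ⧸ J := Ideal.Quotient.mk J with hmkP
  set s := Polynomial.nthRootsFinset e (1 : F) with hs
  have hfactor : f = ∏ b ∈ s, ((X : Polynomial F) - Polynomial.C b) :=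
    Polynomial.X_pow_sub_one_eq_prod he0 hζ
  set c : {b // b ∈ s} → Polynomial R ⧸ J :=
    fun b => mkP (Polynomial.C (AdjoinRoot.root f - algebraMap F R (b : F))) with hc
  have hco : ∀ i j : {b // b ∈ s}, i ≠ j → IsCoprime (c i) (c j) := by
    intro i j hij
    have hne : (j : F) - (i : F) ≠ 0 := by
      rw [sub_ne_zero]
      exact fun h => hij (Subtype.ext h.symm)
    set w : F := ((j : F) - (i : F))⁻¹ with hw
    refine ⟨mkP (Polynomial.C (algebraMap F R w)), -(mkP (Polynomial.C (algebraMap F R w))), ?_⟩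
    have key : c i - c j = mkP (Polynomial.C (algebraMap F R ((j : F) - (i : F)))) := by
      rw [hc]
      dsimp only
      rw [← map_sub, ← map_sub, map_sub (algebraMap F R)]
      congr 2
      ring
    calc mkP (Polynomial.C (algebraMap F R w)) * c i +
          -mkP (Polynomial.C (algebraMap F R w)) * c j
        = mkP (Polynomial.C (algebraMap F R w)) * (c i - c j) := by ring
      _ = mkP (Polynomial.C (algebraMap F R (w * ((j : F) - (i : F))))) := by
          rw [key, ← map_mul, ← map_mul, ← map_mul]
      _ = 1 := by rw [inv_mul_cancel₀ hne]; simp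
  have hprodzero : ∏ b : {x // x ∈ s}, c b = 0 := by
    have h1 : ∏ b : {x // x ∈ s}, (AdjoinRoot.root f - algebraMap F R (b : F)) = 0 := by
      have h2 : ∏ b : {x // x ∈ s}, (AdjoinRoot.root f - algebraMap F R (b : F)) =
          Polynomial.aeval (AdjoinRoot.root f) (∏ b ∈ s, ((X : Polynomial F) - Polynomial.C b)) := by
        rw [map_prod, ← Finset.prod_coe_sort s]
        simp
        rfl
      rw [h2, ← hfactor, AdjoinRoot.aeval_eq, AdjoinRoot.mk_self]
    rw [hc]
    rw [← map_prod, ← map_prod, h1]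
    simp
  set K : {b // b ∈ s} → Ideal (Polynomial R ⧸ J) := fun b => Ideal.span {c b} with hK
  have hKco : Pairwise (Function.onFun IsCoprime K) := fun i j hij =>
    (Ideal.isCoprime_span_singleton_iff _ _).mpr (hco i j hij)
  have hinf : ⨅ b, K b = ⊥ := by
    rw [hK]
    rw [Ideal.iInf_span_singleton (fun i j h => hco i j h), hprodzero]
    simp
  have hPIRq : ∀ b : {x // x ∈ s}, IsPrincipalIdealRing ((Polynomial R ⧸ J) ⧸ K b) := by
    intro b
    set π : Polynomial R →+* (Polynomial R ⧸ J) ⧸ K b :=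
      (Ideal.Quotient.mk (K b)).comp mkP with hπ
    have hπs : Function.Surjective π := by
      have hcoe : ⇑π = ⇑(Ideal.Quotient.mk (K b)) ∘ ⇑mkP := rfl
      rw [hcoe]
      exact Function.Surjective.comp Ideal.Quotient.mk_surjective Ideal.Quotient.mk_surjective
    have hkill : π (Polynomial.C (AdjoinRoot.root f - algebraMap F R (b : F))) = 0 := by
      show Ideal.Quotient.mk (K b) (c b) = 0
      rw [Ideal.Quotient.eq_zero_iff_mem]
      exact Ideal.subset_span rfl
    exact IsPrincipalIdealRing.of_surjective _ (surj_of_kills π hπs (b : F) hkill)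
  haveI := hPIRq
  haveI : IsPrincipalIdealRing (∀ b : {x // x ∈ s}, (Polynomial R ⧸ J) ⧸ K b) :=
    pi_isPrincipalIdealRing (ι := {x // x ∈ s}) (S := fun b => (Polynomial R ⧸ J) ⧸ K b)
  have equivFull : (Polynomial R ⧸ J) ≃+* ∀ b : {x // x ∈ s}, (Polynomial R ⧸ J) ⧸ K b :=
    ((RingEquiv.quotientBot (Polynomial R ⧸ J)).symm.trans
      (Ideal.quotEquivOfEq hinf.symm)).trans
      (Ideal.quotientInfRingEquivPiQuotient K hKco)
  exact IsPrincipalIdealRing.of_surjective equivFull.symm equivFull.symm.surjective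

/-- For every `n ≥ 1`, every ideal of `R[x]/⟨x^n − 1⟩` is principal,
where `R = 𝔽_q[u]/⟨u^e − 1⟩`; that is, every cyclic code of length `n` over `R` is
generated by a single element. -/
theorem quotient_ring_is_principal
    {F : Type} [Field F] [Fintype F] (e : ℕ) (he : 2 ≤ e)
    (hdvd : e ∣ Fintype.card F - 1) :
    ∀ n : ℕ, 1 ≤ n →
      ∀ I : Ideal (Polynomial (Rring F e) ⧸
          Ideal.span {(X : Polynomial (Rring F e)) ^ n - 1}),
        ∃ a, I = Ideal.span {a} := by
  intro n _ I
  haveI := rring_quot_pir e he hdvd n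
  exact ⟨Submodule.IsPrincipal.generator I, (Ideal.span_singleton_generator I).symm⟩
end

section
/- Let C be a cyclic code of length n over R with component codes C_1, …, C_e. Then C is an LCD code (C ∩ C^⊥ = {0}) if and only if C_i is an LCD code over 𝔽_q (C_i ∩ C_i^⊥ = {0}) for every i with 1 ≤ i ≤ e. -/
open Polynomial

/-- A cyclic code `C` of length `n` over `R = 𝔽_q[u]/⟨u^e − 1⟩` with
component codes `C_1, …, C_e` is an LCD code (`C ∩ C^⊥ = {0}`) if and only if every
component code `C_i` is an LCD code over `𝔽_q` (`C_i ∩ C_i^⊥ = {0}`). -/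
theorem lcd_iff_components_lcd
    {F : Type} [Field F] [Fintype F] (e n : ℕ) [NeZero n] (he : 2 ≤ e)
    (hdvd : e ∣ Fintype.card F - 1)
    (α : Fin e → F) (hα : Function.Injective α) (hroot : ∀ i, α i ^ e = 1)
    (σ : Fin e → (Rring F e →ₐ[F] F))
    (hσ : ∀ i, σ i (AdjoinRoot.root ((X : Polynomial F) ^ e - 1)) = α i)
    (C : Submodule (Rring F e) (Fin n → Rring F e))
    (hcyc : ∀ c ∈ C, cyclicShift c ∈ C) :
    C ⊓ dualCode C = ⊥ ↔ ∀ i, compCode (σ i) C ⊓ dualCode (compCode (σ i) C) = ⊥ := by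
  classical
  set q : Polynomial F := (X : Polynomial F) ^ e - 1 with hq
  have he0 : e ≠ 0 := by omega
  have hqm : q.Monic := by
    have := Polynomial.monic_X_pow_sub_C (1 : F) he0
    simpa [hq] using this
  -- evaluation formula
  have heval : ∀ (i : Fin e) (p : Polynomial F),
      σ i (AdjoinRoot.mk q p) = Polynomial.eval (α i) p := by
    intro i p
    rw [← AdjoinRoot.aeval_eq, ← Polynomial.aeval_algHom_apply, hσ,
      ← Polynomial.coe_aeval_eq_eval]
  -- joint injectivity of the σ i
  have hinj : ∀ r : Rring F e, (∀ i, σ i r = 0) → r = 0 := by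
    intro r hr
    obtain ⟨p, rfl⟩ := AdjoinRoot.mk_surjective r
    have hmkeq : AdjoinRoot.mk q p = AdjoinRoot.mk q (p %ₘ q) := by
      rw [AdjoinRoot.mk_eq_mk]
      exact ⟨p /ₘ q, by linear_combination (Polynomial.modByMonic_add_div p q).symm⟩
    have hdeg : (p %ₘ q).natDegree < e := by
      have h1 : (p %ₘ q).degree < q.degree := Polynomial.degree_modByMonic_lt p hqm
      have h2 : q.degree = e := by
        have := Polynomial.degree_X_pow_sub_C (Nat.pos_of_ne_zero he0) (1 : F)
        simpa [hq] using this
      rw [h2] at h1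
      by_cases h0 : p %ₘ q = 0
      · simp [h0, Nat.pos_of_ne_zero he0]
      · exact (Polynomial.natDegree_lt_iff_degree_lt h0).mpr h1
    have hz : p %ₘ q = 0 := by
      apply Polynomial.eq_zero_of_natDegree_lt_card_of_eval_eq_zero _ hα
      · intro i
        have := hr i
        rw [hmkeq, heval] at this
        exact this
      · simpa using hdeg
    rw [hmkeq, hz, map_zero]
  -- idempotent-like elements
  obtain ⟨ε, hε⟩ : ∃ ε : Fin e → Rring F e,
      ∀ k i, σ k (ε i) = if k = i then 1 else 0 := by
    refine ⟨fun i => AdjoinRoot.mk q (Lagrange.basis Finset.univ α i), fun k i => ?_⟩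
    rw [heval]
    by_cases hk : k = i
    · subst hk
      simp [Lagrange.eval_basis_self (Set.injOn_of_injective hα) (Finset.mem_univ k)]
    · simp [hk, Lagrange.eval_basis_of_ne (Ne.symm hk) (Finset.mem_univ k)]
  -- σ i applied to an inner product
  have hpair : ∀ (i : Fin e) (x y : Fin n → Rring F e),
      σ i (∑ j, x j * y j) = ∑ j, σ i (x j) * σ i (y j) := by
    intro i x y
    rw [map_sum]
    simp
  -- membership in component code
  have hmemC : ∀ (i : Fin e) (a : Fin n → F),
      a ∈ compCode (σ i) C ↔ ∃ x ∈ C, ∀ j, σ i (x j) = a j := by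
    intro i a
    constructor
    · rintro ⟨x, hx, rfl⟩
      exact ⟨x, hx, fun j => rfl⟩
    · rintro ⟨x, hx, h⟩
      exact ⟨x, hx, funext h⟩
  have hmemD : ∀ {S ι : Type} [CommRing S] [Fintype ι] (D : Submodule S (ι → S))
      (x : ι → S), x ∈ dualCode D ↔ ∀ y ∈ D, ∑ j, x j * y j = 0 := by
    intro S ι _ _ D x; exact Iff.rfl
  constructor
  · -- C LCD → each C_i LCD
    intro h i
    rw [eq_bot_iff]
    rintro a ⟨haC, haD⟩
    obtain ⟨x, hxC, hxa⟩ := (hmemC i a).mp haC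
    set z : Fin n → Rring F e := fun j => ε i * (algebraMap F (Rring F e)) (a j) with hz
    have hσalg : ∀ (k : Fin e) (c : F), σ k ((algebraMap F (Rring F e)) c) = c := by
      intro k c; exact (σ k).commutes c
    have hzx : z = ε i • x := by
      funext j
      have : z j - ε i * x j = 0 := by
        apply hinj
        intro k
        rw [map_sub, hz]
        simp only [map_mul, hσalg, hε]
        by_cases hk : k = i
        · subst hk
          simp [hxa j]
        · simp [hk]
      have := sub_eq_zero.mp this
      simpa [Pi.smul_apply, smul_eq_mul] using this
    have hzC : z ∈ C := by
      rw [hzx]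
      exact C.smul_mem _ hxC
    have hzD : z ∈ dualCode C := by
      refine (hmemD C z).mpr ?_
      intro y hy
      apply hinj
      intro k
      rw [hpair]
      simp only [hz, map_mul, hσalg, hε]
      by_cases hk : k = i
      · subst hk
        have hyC : (fun j => σ k (y j)) ∈ compCode (σ k) C := (hmemC k _).mpr ⟨y, hy, fun j => rfl⟩
        have := haD _ hyC
        simpa [mul_assoc] using this
      · simp [hk]
    have : z ∈ C ⊓ dualCode C := ⟨hzC, hzD⟩
    rw [h] at this
    have hz0 : z = 0 := this
    funext j
    have := congrFun hz0 j
    have h2 := congrArg (σ i) this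
    rw [hz] at h2
    simp only [map_mul, hσalg, hε, if_pos rfl, one_mul, map_zero] at h2
    simpa using h2
  · -- each C_i LCD → C LCD
    intro h
    rw [eq_bot_iff]
    rintro x ⟨hxC, hxD⟩
    replace hxD := (hmemD C x).mp hxD
    have hxi : ∀ i : Fin e, (fun j => σ i (x j)) = (0 : Fin n → F) := by
      intro i
      have haC : (fun j => σ i (x j)) ∈ compCode (σ i) C := (hmemC i _).mpr ⟨x, hxC, fun j => rfl⟩
      have haD : (fun j => σ i (x j)) ∈ dualCode (compCode (σ i) C) := by
        refine (hmemD _ _).mpr ?_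
        intro b hb
        obtain ⟨y, hyC, hyb⟩ := (hmemC i b).mp hb
        have := hxD y hyC
        have h2 := congrArg (σ i) this
        rw [hpair] at h2
        simp only [map_zero] at h2
        calc ∑ j, σ i (x j) * b j = ∑ j, σ i (x j) * σ i (y j) := by
              apply Finset.sum_congr rfl; intro j _; rw [hyb j]
          _ = 0 := h2
      have : (fun j => σ i (x j)) ∈ compCode (σ i) C ⊓ dualCode (compCode (σ i) C) :=
        ⟨haC, haD⟩
      rw [h i] at this
      exact this
    funext j
    apply hinj
    intro i
    have := congrFun (hxi i) j
    simpa using this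
end

section
/- Suppose the characteristic p of 𝔽_q divides n (i.e., gcd(n, q) ≠ 1). Let C be a cyclic code of length n over R whose component codes are C_i = ⟨g_i(x)⟩ ⊆ 𝔽_q[x]/⟨x^n − 1⟩, where each g_i ∈ 𝔽_q[x] is a monic divisor of x^n − 1. Then C is an LCD code if and only if for every i with 1 ≤ i ≤ e: g_i is self-reciprocal, and every monic irreducible factor of g_i occurs with the same multiplicity in g_i as in x^n − 1. -/
open Polynomial

/-- A monic polynomial `g` (with `g(0) ≠ 0`) is self-reciprocal if
`x^{deg g}·g(1/x) = g(0)·g(x)`. -/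
def SelfReciprocal {F : Type} [Field F] (g : Polynomial F) : Prop :=
  g.reverse = Polynomial.C (g.coeff 0) * g


noncomputable section

namespace LCDAux

variable {F : Type} [Field F]

/-- vector to polynomial -/
def Pvec {n : ℕ} (c : Fin n → F) : F[X] := ∑ j : Fin n, Polynomial.C (c j) * X ^ (j : ℕ)

/-- truncated polynomial from coefficient function -/
def trunc (d : ℕ) (w : ℕ → F) : F[X] := ∑ j ∈ Finset.range d, Polynomial.C (w j) * X ^ j

lemma trunc_coeff (d : ℕ) (w : ℕ → F) (k : ℕ) :
    (trunc d w).coeff k = if k < d then w k else 0 := by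
  unfold trunc
  rw [finset_sum_coeff]
  simp only [C_mul_X_pow_eq_monomial, coeff_monomial]
  by_cases h : k < d
  · rw [Finset.sum_eq_single k]
    · simp [h]
    · intro b _ hb; simp [hb]
    · intro hk; exact absurd (Finset.mem_range.2 h) hk
  · rw [if_neg h]
    apply Finset.sum_eq_zero
    intro b hb
    rw [if_neg]
    exact fun hbk => h (hbk ▸ Finset.mem_range.1 hb)

lemma Pvec_coeff {n : ℕ} (c : Fin n → F) (k : ℕ) :
    (Pvec c).coeff k = if h : k < n then c ⟨k, h⟩ else 0 := by
  unfold Pvec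
  rw [finset_sum_coeff]
  simp only [C_mul_X_pow_eq_monomial, coeff_monomial]
  by_cases h : k < n
  · rw [dif_pos h, Finset.sum_eq_single (⟨k, h⟩ : Fin n)]
    · simp
    · intro b _ hb
      rw [if_neg]
      exact fun hbk => hb (Fin.ext hbk)
    · intro hk; exact absurd (Finset.mem_univ _) hk
  · rw [dif_neg h]
    apply Finset.sum_eq_zero
    intro b _
    rw [if_neg]
    exact fun hbk => h (hbk ▸ b.isLt)

lemma Pvec_natDegree_le {n : ℕ} (hn : n ≠ 0) (c : Fin n → F) : (Pvec c).natDegree ≤ n - 1 := by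
  rw [natDegree_le_iff_coeff_eq_zero]
  intro N hN
  rw [Pvec_coeff, dif_neg]
  omega

lemma Pvec_natDegree_lt {n : ℕ} (hn : n ≠ 0) (c : Fin n → F) : (Pvec c).natDegree < n := by
  have := Pvec_natDegree_le hn c; omega

lemma Pvec_inj {n : ℕ} (c c' : Fin n → F) (h : Pvec c = Pvec c') : c = c' := by
  funext j
  have := congrArg (fun p => Polynomial.coeff p (j : ℕ)) h
  simpa [Pvec_coeff, j.isLt] using this

lemma Pvec_exists {n : ℕ} (hn : n ≠ 0) (f : F[X]) (hf : f.natDegree < n) :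
    ∃ c : Fin n → F, Pvec c = f := by
  refine ⟨fun j => f.coeff (j : ℕ), ?_⟩
  ext k
  rw [Pvec_coeff]
  by_cases h : k < n
  · simp [h]
  · rw [dif_neg h, eq_comm]
    exact coeff_eq_zero_of_natDegree_lt (by omega)

lemma Pvec_zero {n : ℕ} : Pvec (0 : Fin n → F) = 0 := by
  unfold Pvec; simp

end LCDAux

namespace LCDAux

variable {F : Type} [Field F]

lemma reflect_natDegree_le {N : ℕ} (f : F[X]) (hf : f.natDegree ≤ N) :
    (reflect N f).natDegree ≤ N := by
  rw [natDegree_le_iff_coeff_eq_zero]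
  intro M hM
  rw [coeff_reflect, revAt_eq_self_of_lt hM]
  exact coeff_eq_zero_of_natDegree_lt (lt_of_le_of_lt hf hM)

section mlem

variable {n : ℕ} [NeZero n]

lemma m_ne_zero : ((X : F[X]) ^ n - 1) ≠ 0 := by
  have : ((X : F[X]) ^ n - 1) = X ^ n - C 1 := by simp
  rw [this]
  exact (monic_X_pow_sub_C (1 : F) (NeZero.ne n)).ne_zero

lemma m_monic : ((X : F[X]) ^ n - 1).Monic := by
  have : ((X : F[X]) ^ n - 1) = X ^ n - C 1 := by simp
  rw [this]
  exact monic_X_pow_sub_C (1 : F) (NeZero.ne n)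

lemma m_natDegree : ((X : F[X]) ^ n - 1).natDegree = n := by
  have : ((X : F[X]) ^ n - 1) = X ^ n - C 1 := by simp
  rw [this]
  exact natDegree_X_pow_sub_C

lemma m_coeff_zero : ((X : F[X]) ^ n - 1).coeff 0 = -1 := by
  have h : (0:ℕ) ≠ n := (Nat.pos_of_ne_zero (NeZero.ne n)).ne
  simp [coeff_X_pow, if_neg h]

lemma coeff_zero_ne_of_dvd {f : F[X]} (hf : f ∣ (X : F[X]) ^ n - 1) : f.coeff 0 ≠ 0 := by
  obtain ⟨k, hk⟩ := hf
  intro h0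
  have := congrArg (fun p => Polynomial.coeff p 0) hk
  simp only [mul_coeff_zero, h0, zero_mul, m_coeff_zero (n := n) (F := F)] at this
  exact absurd this (by norm_num)

lemma natTrailing_zero_of_dvd {f : F[X]} (hf : f ∣ (X : F[X]) ^ n - 1) :
    f.natTrailingDegree = 0 :=
  natTrailingDegree_eq_zero.2 (Or.inr (coeff_zero_ne_of_dvd hf))

lemma mirror_eq_reverse_of_dvd {f : F[X]} (hf : f ∣ (X : F[X]) ^ n - 1) :
    f.mirror = f.reverse := by
  rw [mirror, natTrailing_zero_of_dvd hf, pow_zero, mul_one]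

lemma mirror_eq_reflect_of_dvd {f : F[X]} (hf : f ∣ (X : F[X]) ^ n - 1) :
    f.mirror = reflect f.natDegree f := by
  rw [mirror_eq_reverse_of_dvd hf, reverse]

lemma mirror_m : ((X : F[X]) ^ n - 1).mirror = -((X : F[X]) ^ n - 1) := by
  rw [mirror_eq_reflect_of_dvd dvd_rfl, m_natDegree]
  rw [reflect_sub, reflect_monomial, revAt_le (le_refl n)]
  have h1 : reflect n (1 : F[X]) = X ^ n := by
    have : (1 : F[X]) = C 1 * X ^ 0 := by simp
    rw [this, reflect_C_mul_X_pow, revAt_le (Nat.zero_le n)]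
    simp
  rw [h1]
  simp

end mlem

lemma dvd_mirror_iff {a b : F[X]} : a ∣ b ↔ a.mirror ∣ b.mirror := by
  constructor
  · rintro ⟨c, rfl⟩
    exact ⟨c.mirror, mirror_mul_of_domain a c⟩
  · rintro ⟨c, hc⟩
    refine ⟨c.mirror, ?_⟩
    have := congrArg Polynomial.mirror hc
    rwa [mirror_mirror, mirror_mul_of_domain, mirror_mirror] at this

lemma mirror_irreducible {p : F[X]} (hp : Irreducible p) : Irreducible p.mirror := by
  constructor
  · intro hu
    have : IsUnit p := by
      obtain ⟨u, hu'⟩ := Polynomial.isUnit_iff.1 hu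
      have := congrArg Polynomial.mirror hu'.2
      rw [mirror_mirror, mirror_C] at this
      exact this ▸ (Polynomial.isUnit_C.2 hu'.1)
    exact hp.not_isUnit this
  · intro a b hab
    have hp' : p = a.mirror * b.mirror := by
      have := congrArg Polynomial.mirror hab
      rwa [mirror_mirror, mirror_mul_of_domain] at this
    rcases hp.isUnit_or_isUnit hp' with h | h
    · left
      obtain ⟨u, hu'⟩ := Polynomial.isUnit_iff.1 h
      have := congrArg Polynomial.mirror hu'.2
      rw [mirror_mirror, mirror_C] at this
      exact this ▸ (Polynomial.isUnit_C.2 hu'.1)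
    · right
      obtain ⟨u, hu'⟩ := Polynomial.isUnit_iff.1 h
      have := congrArg Polynomial.mirror hu'.2
      rw [mirror_mirror, mirror_C] at this
      exact this ▸ (Polynomial.isUnit_C.2 hu'.1)

end LCDAux

namespace LCDAux

variable {F : Type} [Field F] {n : ℕ} [NeZero n]

lemma pair_eq (a y : Fin n → F) :
    ∑ j, a j * y j = (Pvec a * reflect (n - 1) (Pvec y)).coeff (n - 1) := by
  have hn := Nat.pos_of_ne_zero (NeZero.ne n)
  unfold Pvec
  rw [Finset.sum_mul, finset_sum_coeff]
  apply Finset.sum_congr rfl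
  intro j _
  have hj : (j : ℕ) ≤ n - 1 := by have := j.isLt; omega
  have harith : n - 1 = (n - 1 - (j : ℕ)) + (j : ℕ) := by omega
  rw [mul_assoc, coeff_C_mul]
  nth_rw 2 [harith]
  rw [coeff_X_pow_mul, coeff_reflect, revAt_le (by omega : n - 1 - (j:ℕ) ≤ n - 1)]
  have : n - 1 - (n - 1 - (j : ℕ)) = (j : ℕ) := by omega
  rw [this, show (∑ j : Fin n, C (y j) * X ^ (j:ℕ)) = Pvec y from rfl, Pvec_coeff,
    dif_pos j.isLt, Fin.eta]

theorem mem_dualSet_iff {g h : F[X]} (hg : g.Monic) (hm : g * h = (X : F[X]) ^ n - 1)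
    (a : Fin n → F) :
    a ∈ dualSet {c : Fin n → F | g ∣ Pvec c} ↔ h.mirror ∣ Pvec a := by
  have hn := Nat.pos_of_ne_zero (NeZero.ne n)
  have hg0 : g ≠ 0 := hg.ne_zero
  have hm0 : ((X : F[X]) ^ n - 1) ≠ 0 := m_ne_zero
  have hh0 : h ≠ 0 := fun h0 => hm0 (by rw [← hm, h0, mul_zero])
  have hgdvd : g ∣ (X : F[X]) ^ n - 1 := ⟨h, hm.symm⟩
  have hhdvd : h ∣ (X : F[X]) ^ n - 1 := ⟨g, by rw [← hm]; ring⟩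
  have hdeg : g.natDegree + h.natDegree = n := by
    rw [← natDegree_mul hg0 hh0, hm, m_natDegree]
  set d := g.natDegree with hd
  have hdn : d ≤ n := by omega
  have hmirg : g.mirror.natDegree = d := by rw [mirror_natDegree]
  have hmirh : h.mirror.natDegree = n - d := by rw [mirror_natDegree]; omega
  have hmirg0 : g.mirror ≠ 0 := fun h0 => hg0 (mirror_eq_zero.1 h0)
  have hmirh0 : h.mirror ≠ 0 := fun h0 => hh0 (mirror_eq_zero.1 h0)
  have hgh : g.mirror * h.mirror = -((X:F[X])^n - 1) := by
    rw [← mirror_mul_of_domain, hm, mirror_m]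
  constructor
  · -- dual element → mirror h divides
    intro hd'
    -- coefficients of W vanish in window
    set W := Pvec a * g.mirror with hW
    have key : ∀ j, d ≤ j → j ≤ n - 1 → W.coeff j = 0 := by
      intro j hj1 hj2
      set k := j - d with hk
      have hk2 : k ≤ n - 1 - d := by omega
      have hgXk : (g * X ^ k).natDegree < n := by
        rw [natDegree_mul hg0 (pow_ne_zero k (X_ne_zero (R := F))), natDegree_X_pow]
        omega
      obtain ⟨c, hc⟩ := Pvec_exists (NeZero.ne n) (g * X ^ k) hgXk
      have hcV : g ∣ Pvec c := hc ▸ ⟨X ^ k, rfl⟩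
      have h0 := hd' c hcV
      rw [pair_eq, hc] at h0
      have harith : n - 1 = d + (n - 1 - d) := by omega
      rw [harith, reflect_mul g (X ^ k) (le_refl d)
          (by rw [natDegree_X_pow]; omega : (X ^ k : F[X]).natDegree ≤ n - 1 - d),
        ← mirror_eq_reflect_of_dvd hgdvd, reflect_monomial, revAt_le hk2,
        show Pvec a * (g.mirror * X ^ (n - 1 - d - k)) = W * X ^ (n - 1 - d - k) by ring,
        coeff_mul_X_pow', if_pos (by omega : n - 1 - d - k ≤ d + (n - 1 - d))] at h0
      have : d + (n - 1 - d) - (n - 1 - d - k) = j := by omega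
      rwa [this] at h0
    -- decomposition of W
    have hWdeg : W.natDegree ≤ n - 1 + d := by
      calc W.natDegree ≤ (Pvec a).natDegree + g.mirror.natDegree := natDegree_mul_le
        _ ≤ n - 1 + d := by have := Pvec_natDegree_le (NeZero.ne n) a; omega
    set s : F[X] := trunc d (fun j => W.coeff j) with hsdef
    set t : F[X] := trunc d (fun j => W.coeff (n + j)) with htdef
    have hWst : W = s + X ^ n * t := by
      ext j
      rw [coeff_add, hsdef, htdef, trunc_coeff,
        show (X:F[X]) ^ n * t = t * X ^ n by ring, coeff_mul_X_pow', trunc_coeff]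
      rcases lt_or_ge j d with hj | hj
      · rw [if_pos hj, if_neg (by omega)]
        ring
      rcases lt_or_ge j n with hj2 | hj2
      · rw [key j hj (by omega), if_neg (by omega), if_neg (by omega)]
        ring
      rcases lt_or_ge j (n + d) with hj3 | hj3
      · rw [if_neg (by omega), if_pos (by omega), if_pos (by omega)]
        have : n + (j - n) = j := by omega
        rw [this]
        ring
      · rw [if_neg (by omega), if_pos (by omega), if_neg (by omega),
          coeff_eq_zero_of_natDegree_lt (by omega)]
        ring
    -- the key algebraic identity
    set z : F[X] := Pvec a + h.mirror * t with hzdef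
    have hz : g.mirror * z = s + t := by
      have h1 : g.mirror * z = W + (g.mirror * h.mirror) * t := by
        rw [hzdef, hW]; ring
      rw [h1, hgh, hWst]; ring
    have hst : ∀ j, d ≤ j → (s + t).coeff j = 0 := by
      intro j hj
      rw [coeff_add, hsdef, htdef, trunc_coeff, trunc_coeff, if_neg (by omega),
        if_neg (by omega)]
      ring
    have hz0 : z = 0 := by
      by_contra hz0
      have hne : g.mirror * z ≠ 0 := mul_ne_zero hmirg0 hz0
      have hdeg2 : (g.mirror * z).natDegree = d + z.natDegree := by
        rw [natDegree_mul hmirg0 hz0, hmirg]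
      have hlead : (s + t).coeff ((s+t).natDegree) ≠ 0 := by
        rw [← leadingCoeff]
        exact leadingCoeff_ne_zero.2 (hz ▸ hne)
      exact hlead (hst _ (by rw [← hz, hdeg2]; omega))
    refine ⟨-t, ?_⟩
    have h2 : Pvec a + h.mirror * t = 0 := by rw [← hzdef]; exact hz0
    linear_combination h2
  · -- mirror h ∣ Pvec a → dual element
    rintro ⟨t, ht⟩ y hy
    obtain ⟨s, hs⟩ := hy
    rw [pair_eq]
    by_cases hy0 : Pvec y = 0
    · rw [hy0, reflect_zero, mul_zero, coeff_zero]
    have hs0 : s ≠ 0 := fun h0 => hy0 (by rw [hs, h0, mul_zero])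
    have hds : d + s.natDegree ≤ n - 1 := by
      have := Pvec_natDegree_le (NeZero.ne n) y
      rw [hs, natDegree_mul hg0 hs0] at this
      omega
    have harith : n - 1 = d + (n - 1 - d) := by omega
    rw [hs]
    nth_rw 1 [harith]
    rw [reflect_mul g s (le_refl d) (by omega), ← mirror_eq_reflect_of_dvd hgdvd]
    have hexp : Pvec a * (g.mirror * reflect (n - 1 - d) s)
        = -(((X:F[X])^n - 1) * (t * reflect (n - 1 - d) s)) := by
      rw [ht]; linear_combination (t * reflect (n - 1 - d) s) * hgh
    rw [hexp, coeff_neg]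
    set w := t * reflect (n - 1 - d) s with hw
    have hcoeff1 : (((X:F[X])^n - 1) * w).coeff (n-1)
        = (w * X ^ n).coeff (n-1) - w.coeff (n-1) := by
      have : ((X:F[X])^n - 1) * w = w * X ^ n - w := by ring
      rw [this, coeff_sub]
    have hc2 : (w * X ^ n).coeff (n-1) = 0 := by
      rw [coeff_mul_X_pow', if_neg (by omega)]
    have hc3 : w.coeff (n-1) = 0 := by
      by_cases ht0 : t = 0
      · rw [hw, ht0, zero_mul, coeff_zero]
      · have hta : (n - d) + t.natDegree ≤ n - 1 := by
          have h1 := Pvec_natDegree_le (NeZero.ne n) a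
          rw [ht, natDegree_mul hmirh0 ht0, hmirh] at h1
          omega
        apply coeff_eq_zero_of_natDegree_lt
        calc w.natDegree ≤ t.natDegree + (reflect (n-1-d) s).natDegree := natDegree_mul_le
          _ ≤ t.natDegree + (n-1-d) := by
              have := reflect_natDegree_le s (by omega : s.natDegree ≤ n - 1 - d)
              omega
          _ < n - 1 := by omega
    rw [hcoeff1, hc2, hc3]
    ring

end LCDAux

namespace LCDAux

variable {F : Type} [Field F] {n : ℕ} [NeZero n]

/-- monicization -/
lemma exists_monic_irreducible_dvd {r : F[X]} (hr : Irreducible r) :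
    ∃ p : F[X], p.Monic ∧ Irreducible p ∧ (p ∣ r) ∧ (r ∣ p) := by
  have hr0 : r ≠ 0 := hr.ne_zero
  have hlc : r.leadingCoeff ≠ 0 := leadingCoeff_ne_zero.2 hr0
  refine ⟨C r.leadingCoeff⁻¹ * r, ?_, ?_, ⟨C r.leadingCoeff, by
      rw [mul_right_comm, ← C_mul, inv_mul_cancel₀ hlc, C_1, one_mul]⟩,
    ⟨C r.leadingCoeff⁻¹, mul_comm _ _⟩⟩
  · unfold Polynomial.Monic
    rw [leadingCoeff_mul, leadingCoeff_C]
    exact inv_mul_cancel₀ hlc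
  · have : Associated r (C r.leadingCoeff⁻¹ * r) := by
      refine ⟨(Polynomial.isUnit_C.2 (IsUnit.mk0 _ (inv_ne_zero hlc))).unit, ?_⟩
      simp [mul_comm]
    exact this.irreducible hr

theorem cond_iff_coprime {g h : F[X]} (hg : g.Monic) (hm : g * h = (X : F[X]) ^ n - 1) :
    (∀ f : F[X], f.natDegree < n → g ∣ f → h.mirror ∣ f → f = 0)
      ↔ IsCoprime g h.mirror := by
  have hn := Nat.pos_of_ne_zero (NeZero.ne n)
  have hg0 : g ≠ 0 := hg.ne_zero
  have hm0 : ((X : F[X]) ^ n - 1) ≠ 0 := m_ne_zero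
  have hh0 : h ≠ 0 := fun h0 => hm0 (by rw [← hm, h0, mul_zero])
  have hdeg : g.natDegree + h.natDegree = n := by
    rw [← natDegree_mul hg0 hh0, hm, m_natDegree]
  have hmirh : h.mirror.natDegree = n - g.natDegree := by rw [mirror_natDegree]; omega
  have hmirh0 : h.mirror ≠ 0 := fun h0 => hh0 (mirror_eq_zero.1 h0)
  constructor
  · intro hcond
    classical
    by_contra hncop
    have hgcd : ¬IsUnit (EuclideanDomain.gcd g h.mirror) := by
      intro hu
      exact hncop (EuclideanDomain.gcd_isUnit_iff.1 hu)
    have hgcd0 : EuclideanDomain.gcd g h.mirror ≠ 0 := by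
      intro h0
      exact hg0 (EuclideanDomain.gcd_eq_zero_iff.1 h0).1
    obtain ⟨r, hr, hrdvd⟩ := WfDvdMonoid.exists_irreducible_factor hgcd hgcd0
    have hrg : r ∣ g := hrdvd.trans (EuclideanDomain.gcd_dvd_left _ _)
    have hrh : r ∣ h.mirror := hrdvd.trans (EuclideanDomain.gcd_dvd_right _ _)
    obtain ⟨w, hw⟩ := hrh
    obtain ⟨v, hv⟩ := hrg
    have hr0 : r ≠ 0 := hr.ne_zero
    have hw0 : w ≠ 0 := fun h0 => hmirh0 (by rw [hw, h0, mul_zero])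
    have hv0 : v ≠ 0 := fun h0 => hg0 (by rw [hv, h0, mul_zero])
    have hrpos : 0 < r.natDegree := hr.natDegree_pos
    set f := g * w with hf
    have hf0 : f ≠ 0 := mul_ne_zero hg0 hw0
    have h1 : g ∣ f := ⟨w, rfl⟩
    have h2 : h.mirror ∣ f := ⟨v, by rw [hf, hw, hv]; ring⟩
    have h3 : f.natDegree < n := by
      have hrw : r.natDegree + w.natDegree = n - g.natDegree := by
        rw [← natDegree_mul hr0 hw0, ← hw, hmirh]
      rw [hf, natDegree_mul hg0 hw0]
      omega
    exact hf0 (hcond f h3 h1 h2)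
  · intro hcop f hfdeg h1 h2
    by_contra hf0
    have := hcop.mul_dvd h1 h2
    have hle := Polynomial.natDegree_le_of_dvd this hf0
    rw [natDegree_mul hg0 hmirh0, hmirh] at hle
    omega

theorem coprime_iff_rhs {g h : F[X]} (hg : g.Monic) (hm : g * h = (X : F[X]) ^ n - 1) :
    IsCoprime g h.mirror ↔
      (SelfReciprocal g ∧ ∀ p : F[X], p.Monic → Irreducible p → p ∣ g →
        multiplicity p g = multiplicity p ((X : F[X]) ^ n - 1)) := by
  have hn := Nat.pos_of_ne_zero (NeZero.ne n)
  have hg0 : g ≠ 0 := hg.ne_zero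
  have hm0 : ((X : F[X]) ^ n - 1) ≠ 0 := m_ne_zero
  have hh0 : h ≠ 0 := fun h0 => hm0 (by rw [← hm, h0, mul_zero])
  have hgdvd : g ∣ (X : F[X]) ^ n - 1 := ⟨h, hm.symm⟩
  have hhdvd : h ∣ (X : F[X]) ^ n - 1 := ⟨g, by rw [← hm]; ring⟩
  have hgc0 : g.coeff 0 ≠ 0 := coeff_zero_ne_of_dvd hgdvd
  have hCunit : IsUnit (C (g.coeff 0)) := Polynomial.isUnit_C.2 (IsUnit.mk0 _ hgc0)
  have hgh : g.mirror * h.mirror = -((X:F[X])^n - 1) := by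
    rw [← mirror_mul_of_domain, hm, mirror_m]
  have hsr : SelfReciprocal g ↔ g.mirror = C (g.coeff 0) * g := by
    unfold SelfReciprocal
    rw [← mirror_eq_reverse_of_dvd hgdvd]
  constructor
  · intro hcop
    have hself : g.mirror = C (g.coeff 0) * g := by
      have hdvd1 : g ∣ g.mirror * h.mirror := by
        rw [hgh, ← hm]
        exact ⟨-h, by ring⟩
      have hdvd2 : g ∣ g.mirror := hcop.dvd_of_dvd_mul_right hdvd1
      obtain ⟨c, hc⟩ := hdvd2
      have hg0' : g.mirror ≠ 0 := fun h0 => hg0 (mirror_eq_zero.1 h0)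
      have hc0 : c ≠ 0 := fun h0 => hg0' (by rw [hc, h0, mul_zero])
      have hcdeg : c.natDegree = 0 := by
        have := congrArg Polynomial.natDegree hc
        rw [mirror_natDegree, natDegree_mul hg0 hc0] at this
        omega
      obtain ⟨a, ha⟩ := Polynomial.natDegree_eq_zero.1 hcdeg
      have hlead : g.mirror.leadingCoeff = g.coeff 0 := by
        rw [mirror_leadingCoeff, trailingCoeff, natTrailing_zero_of_dvd hgdvd]
      have ha2 : a = g.coeff 0 := by
        have := congrArg Polynomial.leadingCoeff hc
        rw [hlead, leadingCoeff_mul, hg.leadingCoeff, one_mul, ← ha, leadingCoeff_C] at this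
        exact this.symm
      rw [hc, ← ha, ha2, mul_comm]
    refine ⟨hsr.2 hself, ?_⟩
    intro p hpm hpirr hpg
    have hpprime : Prime p := (UniqueFactorizationMonoid.irreducible_iff_prime).1 hpirr
    have hfin : FiniteMultiplicity p ((X:F[X])^n - 1) :=
      FiniteMultiplicity.of_not_isUnit hpirr.not_isUnit hm0
    have hfin' : FiniteMultiplicity p (g * h) := by rwa [hm]
    have hmul : multiplicity p (g * h) = multiplicity p g + multiplicity p h :=
      multiplicity_mul hpprime hfin'
    have hph : ¬ p ∣ h := by
      intro hph
      have h1 : p.mirror ∣ g.mirror := dvd_mirror_iff.1 hpg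
      have h2 : p.mirror ∣ g := by
        rw [hself] at h1
        exact (IsUnit.dvd_mul_left hCunit).1 h1
      have h3 : p.mirror ∣ h.mirror := dvd_mirror_iff.1 hph
      have := hcop.isUnit_of_dvd' h2 h3
      exact (mirror_irreducible hpirr).not_isUnit this
    have : multiplicity p h = 0 := multiplicity_eq_zero.2 hph
    rw [← hm, hmul, this, add_zero]
  · rintro ⟨hself', hmult⟩
    have hself : g.mirror = C (g.coeff 0) * g := hsr.1 hself'
    classical
    rw [← EuclideanDomain.gcd_isUnit_iff]
    by_contra hgcd
    have hgcd0 : EuclideanDomain.gcd g h.mirror ≠ 0 := by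
      intro h0
      exact hg0 (EuclideanDomain.gcd_eq_zero_iff.1 h0).1
    obtain ⟨r, hr, hrdvd⟩ := WfDvdMonoid.exists_irreducible_factor hgcd hgcd0
    have hrg : r ∣ g := hrdvd.trans (EuclideanDomain.gcd_dvd_left _ _)
    have hrh : r ∣ h.mirror := hrdvd.trans (EuclideanDomain.gcd_dvd_right _ _)
    -- pass to the mirror of r, monicized
    have hmirrh : r.mirror ∣ h := by
      have := dvd_mirror_iff.1 hrh
      rwa [mirror_mirror] at this
    have hmirrg : r.mirror ∣ g := by
      have h1 : r.mirror ∣ g.mirror := dvd_mirror_iff.1 hrg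
      rw [hself] at h1
      exact (IsUnit.dvd_mul_left hCunit).1 h1
    obtain ⟨q, hqm, hqirr, hqr, hrq⟩ := exists_monic_irreducible_dvd (mirror_irreducible hr)
    have hqg : q ∣ g := hqr.trans hmirrg
    have hqh : q ∣ h := hqr.trans hmirrh
    have hqprime : Prime q := (UniqueFactorizationMonoid.irreducible_iff_prime).1 hqirr
    have hfin' : FiniteMultiplicity q (g * h) := by
      rw [hm]; exact FiniteMultiplicity.of_not_isUnit hqirr.not_isUnit hm0
    have hmul : multiplicity q (g * h) = multiplicity q g + multiplicity q h :=
      multiplicity_mul hqprime hfin'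
    have heq := hmult q hqm hqirr hqg
    rw [← hm, hmul] at heq
    have : multiplicity q h = 0 := by omega
    exact (multiplicity_eq_zero.1 this) hqh

end LCDAux

namespace LCDAux

variable {F : Type} [Field F] {n : ℕ} [NeZero n]

lemma toPoly_eq (c : Fin n → F) :
    toPoly c = Ideal.Quotient.mk (Ideal.span {(X : F[X]) ^ n - 1}) (Pvec c) := rfl

lemma toPoly_inj : Function.Injective (toPoly (S := F) (n := n)) := by
  have hn := Nat.pos_of_ne_zero (NeZero.ne n)
  intro c c' hcc
  rw [toPoly_eq, toPoly_eq, Ideal.Quotient.eq] at hcc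
  have hdvd : ((X:F[X])^n - 1) ∣ (Pvec c - Pvec c') := Ideal.mem_span_singleton.1 hcc
  have hz : Pvec c - Pvec c' = 0 := by
    by_contra h0
    have h1 := Polynomial.natDegree_le_of_dvd hdvd h0
    rw [m_natDegree] at h1
    have h2 : (Pvec c - Pvec c').natDegree < n := by
      have h5 := (Polynomial.natDegree_sub_le (Pvec c) (Pvec c')).trans
        (max_le (Pvec_natDegree_le (NeZero.ne n) c) (Pvec_natDegree_le (NeZero.ne n) c'))
      omega
    omega
  exact Pvec_inj _ _ (sub_eq_zero.1 hz)

lemma quotient_span_iff {g h : F[X]} (hm : g * h = (X : F[X]) ^ n - 1) (f : F[X]) :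
    (Ideal.Quotient.mk (Ideal.span {(X : F[X]) ^ n - 1}) f ∈
      Ideal.span {Ideal.Quotient.mk (Ideal.span {(X : F[X]) ^ n - 1}) g}) ↔ g ∣ f := by
  constructor
  · intro hf
    obtain ⟨a, ha⟩ := Ideal.mem_span_singleton'.1 hf
    obtain ⟨s, rfl⟩ := Ideal.Quotient.mk_surjective a
    have h0 : Ideal.Quotient.mk (Ideal.span {(X : F[X]) ^ n - 1}) (s * g - f) = 0 := by
      rw [map_sub, map_mul, ha, sub_self]
    have h1 : ((X:F[X])^n - 1) ∣ (s * g - f) :=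
      Ideal.mem_span_singleton.1 (Ideal.Quotient.eq_zero_iff_mem.1 h0)
    obtain ⟨t, ht⟩ := h1
    refine ⟨s - h * t, ?_⟩
    have : f = s * g - ((X:F[X])^n - 1) * t := by rw [← ht]; ring
    rw [this, ← hm]; ring
  · rintro ⟨s, rfl⟩
    rw [map_mul]
    exact Ideal.mul_mem_right _ _ (Ideal.subset_span rfl)

theorem field_main {g h : F[X]} (hg : g.Monic) (hm : g * h = (X : F[X]) ^ n - 1) :
    (∀ x : Fin n → F, g ∣ Pvec x → x ∈ dualSet {c : Fin n → F | g ∣ Pvec c} → x = 0)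
      ↔ (SelfReciprocal g ∧ ∀ p : F[X], p.Monic → Irreducible p → p ∣ g →
          multiplicity p g = multiplicity p ((X : F[X]) ^ n - 1)) := by
  rw [← coprime_iff_rhs hg hm, ← cond_iff_coprime hg hm]
  constructor
  · intro H f hfdeg h1 h2
    obtain ⟨c, rfl⟩ := Pvec_exists (NeZero.ne n) f hfdeg
    rw [H c h1 ((mem_dualSet_iff hg hm c).2 h2), Pvec_zero]
  · intro H x h1 h2
    have h3 := H (Pvec x) (Pvec_natDegree_lt (NeZero.ne n) x) h1
      ((mem_dualSet_iff hg hm x).1 h2)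
    exact Pvec_inj x 0 (by rw [h3, Pvec_zero])

end LCDAux

namespace LCDAuxB

variable {F : Type} [Field F] {e : ℕ} {α : Fin e → F} {σ : Fin e → (Rring F e →ₐ[F] F)}

lemma sigma_mk (hσ : ∀ i, σ i (AdjoinRoot.root ((X : Polynomial F) ^ e - 1)) = α i)
    (i : Fin e) (p : F[X]) :
    σ i (AdjoinRoot.mk ((X : F[X]) ^ e - 1) p) = p.eval (α i) := by
  rw [← AdjoinRoot.aeval_eq, ← Polynomial.aeval_algHom_apply, hσ i]
  exact congrFun (Polynomial.coe_aeval_eq_eval (α i)) p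

lemma prod_dvd_of_roots (hα : Function.Injective α) {p : F[X]} (hp : p ≠ 0)
    (hroots : ∀ i, p.eval (α i) = 0) :
    (∏ i : Fin e, (X - C (α i))) ∣ p := by
  have hnodup : (Finset.univ.val.map α).Nodup :=
    Multiset.Nodup.map hα Finset.univ.nodup
  have hsub : (Finset.univ.val.map α) ≤ p.roots := by
    rw [Multiset.le_iff_subset hnodup]
    intro x hx
    obtain ⟨i, _, rfl⟩ := Multiset.mem_map.1 hx
    rw [Polynomial.mem_roots hp]
    exact hroots i
  have h1 : (∏ i : Fin e, (X - C (α i)))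
      = ((Finset.univ.val.map α).map (fun a => (X : F[X]) - C a)).prod := by
    rw [Multiset.map_map]
    rfl
  rw [h1]
  exact (Multiset.prod_dvd_prod_of_le (Multiset.map_le_map hsub)).trans
    (prod_multiset_X_sub_C_dvd p)

lemma prod_eq (he : e ≠ 0) (hα : Function.Injective α) (hroot : ∀ i, α i ^ e = 1) :
    (∏ i : Fin e, (X - C (α i))) = (X : F[X]) ^ e - 1 := by
  have hmC : ((X:F[X])^e - 1) = X ^ e - C 1 := by simp
  have hmonic : ((X:F[X])^e - 1).Monic := by
    rw [hmC]; exact monic_X_pow_sub_C (1 : F) he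
  have hdvd : (∏ i : Fin e, (X - C (α i))) ∣ ((X:F[X])^e - 1) :=
    prod_dvd_of_roots hα hmonic.ne_zero (fun i => by simp [hroot i])
  have hqmonic : (∏ i : Fin e, ((X : F[X]) - C (α i))).Monic :=
    monic_prod_of_monic _ _ (fun i _ => monic_X_sub_C (α i))
  have hqdeg : (∏ i : Fin e, ((X : F[X]) - C (α i))).natDegree = e := by
    rw [natDegree_prod _ _ (fun i _ => X_sub_C_ne_zero (α i))]
    simp
  have hmdeg : ((X:F[X])^e - 1).natDegree = e := by
    rw [hmC]; exact natDegree_X_pow_sub_C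
  obtain ⟨c, hc⟩ := hdvd
  have hc0 : c ≠ 0 := by
    intro h0
    exact hmonic.ne_zero (by rw [hc, h0, mul_zero])
  have hcdeg : c.natDegree = 0 := by
    have := congrArg Polynomial.natDegree hc
    rw [hmdeg, natDegree_mul hqmonic.ne_zero hc0, hqdeg] at this
    omega
  obtain ⟨a, ha⟩ := Polynomial.natDegree_eq_zero.1 hcdeg
  have ha1 : a = 1 := by
    have := congrArg Polynomial.leadingCoeff hc
    rw [hmonic.leadingCoeff, leadingCoeff_mul, hqmonic.leadingCoeff, one_mul, ← ha,
      leadingCoeff_C] at this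
    exact this.symm
  rw [hc, ← ha, ha1, C_1, mul_one]

lemma sigma_zero (he : e ≠ 0) (hα : Function.Injective α) (hroot : ∀ i, α i ^ e = 1)
    (hσ : ∀ i, σ i (AdjoinRoot.root ((X : Polynomial F) ^ e - 1)) = α i)
    {r : Rring F e} (h : ∀ i, σ i r = 0) : r = 0 := by
  obtain ⟨p, rfl⟩ := AdjoinRoot.mk_surjective r
  by_cases hp : p = 0
  · rw [hp, map_zero]
  have hev : ∀ i, p.eval (α i) = 0 := fun i => by rw [← sigma_mk hσ]; exact h i
  have hdvd := prod_dvd_of_roots hα hp hev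
  rw [prod_eq he hα hroot] at hdvd
  exact AdjoinRoot.mk_eq_zero.2 hdvd

lemma sigma_surj (hα : Function.Injective α)
    (hσ : ∀ i, σ i (AdjoinRoot.root ((X : Polynomial F) ^ e - 1)) = α i)
    (v : Fin e → F) : ∃ r : Rring F e, ∀ i, σ i r = v i := by
  refine ⟨AdjoinRoot.mk _ (Lagrange.interpolate Finset.univ α v), fun i => ?_⟩
  rw [sigma_mk hσ]
  exact Lagrange.eval_interpolate_at_node v hα.injOn (Finset.mem_univ i)

section reduction

variable {n : ℕ}

lemma mem_dualCode {C : Submodule (Rring F e) (Fin n → Rring F e)}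
    {x : Fin n → Rring F e} :
    x ∈ dualCode C ↔ ∀ y ∈ C, ∑ j, x j * y j = 0 := Iff.rfl

lemma mem_compCode {C : Submodule (Rring F e) (Fin n → Rring F e)} {i : Fin e}
    {x : Fin n → F} :
    x ∈ compCode (σ i) C ↔ ∃ c ∈ C, (fun j => σ i (c j)) = x := by
  constructor
  · rintro ⟨c, hc, rfl⟩
    exact ⟨c, hc, rfl⟩
  · rintro ⟨c, hc, rfl⟩
    exact ⟨c, hc, rfl⟩

theorem lcd_reduction
    (hinj : ∀ r : Rring F e, (∀ i, σ i r = 0) → r = 0)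
    (hsurj : ∀ v : Fin e → F, ∃ r : Rring F e, ∀ i, σ i r = v i)
    (C : Submodule (Rring F e) (Fin n → Rring F e)) :
    C ⊓ dualCode C = ⊥ ↔ ∀ i : Fin e, ∀ x ∈ (compCode (σ i) C : Set (Fin n → F)),
      x ∈ dualSet (compCode (σ i) C : Set (Fin n → F)) → x = 0 := by
  constructor
  · intro hC i x hx hxd
    obtain ⟨c, hcC, hcx⟩ := mem_compCode.1 hx
    obtain ⟨ε, hε⟩ := hsurj (fun j => if j = i then 1 else 0)
    set z : Fin n → Rring F e := ε • c with hz
    have hzC : z ∈ C := C.smul_mem ε hcC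
    have hzD : z ∈ dualCode C := by
      rw [mem_dualCode]
      intro y hy
      have h1 : ∑ j, z j * y j = ε * ∑ j, c j * y j := by
        rw [Finset.mul_sum]
        apply Finset.sum_congr rfl
        intro j _
        rw [hz]
        simp [mul_assoc]
      rw [h1]
      apply hinj
      intro k
      rw [map_mul]
      by_cases hk : k = i
      · subst hk
        have h2 : σ k (∑ j, c j * y j) = ∑ j, x j * (fun j => σ k (y j)) j := by
          rw [map_sum]
          apply Finset.sum_congr rfl
          intro j _
          rw [map_mul, ← hcx]
        rw [h2, hxd (fun j => σ k (y j)) (mem_compCode.2 ⟨y, hy, rfl⟩), mul_zero]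
      · rw [hε k, if_neg hk, zero_mul]
    have hz0 : z = 0 := by
      rw [Submodule.eq_bot_iff] at hC
      exact hC z (Submodule.mem_inf.2 ⟨hzC, hzD⟩)
    funext j
    have h3 : σ i (z j) = x j := by
      rw [hz]
      show σ i (ε * c j) = x j
      rw [map_mul, hε i, if_pos rfl, one_mul, ← hcx]
    rw [← h3, hz0]
    simp
  · intro hcomp'
    rw [Submodule.eq_bot_iff]
    intro z hz
    obtain ⟨hzC, hzD⟩ := Submodule.mem_inf.1 hz
    funext j
    apply hinj
    intro i
    have hx : (fun j => σ i (z j)) ∈ (compCode (σ i) C : Set (Fin n → F)) :=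
      mem_compCode.2 ⟨z, hzC, rfl⟩
    have hxd : (fun j => σ i (z j)) ∈ dualSet (compCode (σ i) C : Set (Fin n → F)) := by
      rintro y' ⟨c, hcC, rfl⟩
      have h4 : ∑ j, σ i (z j) * ((σ i).toLinearMap.compLeft (Fin n) c) j
          = σ i (∑ j, z j * c j) := by
        rw [map_sum]
        apply Finset.sum_congr rfl
        intro j _
        rw [map_mul]
        rfl
      rw [h4, (mem_dualCode.1 hzD) c hcC, map_zero]
    have h5 := hcomp' i _ hx hxd
    have := congrFun h5 j
    simpa using this

end reduction

end LCDAuxB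

end

/-- Suppose the characteristic of `𝔽_q` divides `n` (`gcd(n,q) ≠ 1`).
A cyclic code `C` of length `n` over `R = 𝔽_q[u]/⟨u^e − 1⟩` with component codes
`C_i = ⟨g_i(x)⟩`, the `g_i` monic divisors of `x^n − 1`, is LCD if and only if each
`g_i` is self-reciprocal and every monic irreducible factor of `g_i` has the same
multiplicity in `g_i` as in `x^n − 1`. -/
theorem lcd_iff_selfReciprocal_and_multiplicity
    {F : Type} [Field F] [Fintype F] (e n : ℕ) [NeZero n] (he : 2 ≤ e)
    (hdvd : e ∣ Fintype.card F - 1)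
    (hchar : (ringChar F) ∣ n)
    (α : Fin e → F) (hα : Function.Injective α) (hroot : ∀ i, α i ^ e = 1)
    (σ : Fin e → (Rring F e →ₐ[F] F))
    (hσ : ∀ i, σ i (AdjoinRoot.root ((X : Polynomial F) ^ e - 1)) = α i)
    (C : Submodule (Rring F e) (Fin n → Rring F e))
    (hcyc : ∀ c ∈ C, cyclicShift c ∈ C)
    (g : Fin e → Polynomial F)
    (hmonic : ∀ i, (g i).Monic)
    (hgdvd : ∀ i, g i ∣ (X : Polynomial F) ^ n - 1)
    (hcomp : ∀ i, toPoly '' (compCode (σ i) C : Set (Fin n → F)) =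
      (Ideal.span {Ideal.Quotient.mk (Ideal.span {(X : Polynomial F) ^ n - 1}) (g i)} :
        Set (Polynomial F ⧸ Ideal.span {(X : Polynomial F) ^ n - 1}))) :
    C ⊓ dualCode C = ⊥ ↔
      ∀ i, SelfReciprocal (g i) ∧
        ∀ p : Polynomial F, p.Monic → Irreducible p → p ∣ g i →
          multiplicity p (g i) = multiplicity p ((X : Polynomial F) ^ n - 1) := by
  classical
  rw [LCDAuxB.lcd_reduction
    (fun r h => LCDAuxB.sigma_zero (by omega : e ≠ 0) hα hroot hσ h)
    (LCDAuxB.sigma_surj hα hσ) C]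
  apply forall_congr'
  intro i
  obtain ⟨h, hh⟩ := hgdvd i
  have hm : g i * h = (X : Polynomial F) ^ n - 1 := hh.symm
  have hset : (compCode (σ i) C : Set (Fin n → F))
      = {c : Fin n → F | g i ∣ LCDAux.Pvec c} := by
    ext x
    constructor
    · intro hx
      have h1 : toPoly x ∈
          (Ideal.span {Ideal.Quotient.mk (Ideal.span {(X : Polynomial F) ^ n - 1}) (g i)} :
            Set (Polynomial F ⧸ Ideal.span {(X : Polynomial F) ^ n - 1})) :=
        (hcomp i) ▸ Set.mem_image_of_mem toPoly hx
      exact (LCDAux.quotient_span_iff hm (LCDAux.Pvec x)).1 h1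
    · intro hx
      have h1 : toPoly x ∈ toPoly '' (compCode (σ i) C : Set (Fin n → F)) := by
        rw [hcomp i]
        exact (LCDAux.quotient_span_iff hm (LCDAux.Pvec x)).2 hx
      obtain ⟨y, hy, hyx⟩ := h1
      exact (LCDAux.toPoly_inj hyx) ▸ hy
  rw [hset]
  exact LCDAux.field_main (hmonic i) hm
end
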